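/- arXiv:1511.06473 — 7 statements merged into one kernel-verified Lean document; each statement's English description precedes it below -/
import Mathlib

section
/- Let A ⊆ B be a ring extension and let J be an ideal of B that is contained in A (so J is a common ideal of A and B). If A/J is perinormal in B/J, then A is perinormal in B. -/
/-- A ring homomorphism `f : A →+* B` satisfies going-down: whenever `p₁ ⊆ p₂` are primes of `A`
and `Q₂` is a prime of `B` contracting to `p₂`, there is a prime `Q₁ ⊆ Q₂` of `B`
contracting to `p₁`. -/
def GoingDownHom {A B : Type*} [CommRing A] [CommRing B] (f : A →+* B) : Prop :=
  ∀ (p₁ p₂ : Ideal A), p₁.IsPrime → p₂.IsPrime → p₁ ≤ p₂ →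
    ∀ Q₂ : Ideal B, Q₂.IsPrime → Q₂.comap f = p₂ →
      ∃ Q₁ : Ideal B, Q₁.IsPrime ∧ Q₁ ≤ Q₂ ∧ Q₁.comap f = p₁

/-- The canonical map from the localization of a subring `A ⊆ B` at a submonoid `W ⊆ A`
to the localization of `B` at the image of `W` in `B`. -/
noncomputable def locMap {B : Type*} [CommRing B] (A : Subring B) (W : Submonoid A) :
    Localization W →+* Localization (W.map A.subtype) :=
  IsLocalization.lift (M := W) (S := Localization W)
    (g := (algebraMap B (Localization (W.map A.subtype))).comp A.subtype)
    (fun y => IsLocalization.map_units (M := W.map A.subtype) (Localization (W.map A.subtype))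
      ⟨A.subtype y, ⟨y, y.2, rfl⟩⟩)

/-- A subring `A ⊆ B` is perinormal in `B` at the prime `p` of `A`:  the localization `A_p`
(i.e. the image of `Localization.AtPrime p` in `B_{A∖p}`) is the only local ring `T` between
`A_p` and `B_{A∖p}` whose maximal ideal contracts to `pA_p` and which satisfies going-down
over `A_p`. -/
def PeriAt {B : Type*} [CommRing B] (A : Subring B) (p : Ideal A) (hp : p.IsPrime) : Prop :=
  haveI := hp
  ∀ (T : Subring (Localization (p.primeCompl.map A.subtype)))
    (hT : (locMap A p.primeCompl).range ≤ T),
    IsLocalRing T →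
    (∀ M : Ideal T, M.IsMaximal →
      M.comap ((locMap A p.primeCompl).codRestrict T (fun x => hT ⟨x, rfl⟩)) =
        IsLocalRing.maximalIdeal (Localization.AtPrime p)) →
    GoingDownHom ((locMap A p.primeCompl).codRestrict T (fun x => hT ⟨x, rfl⟩)) →
    T = (locMap A p.primeCompl).range

/-- A subring `A` of `B` is perinormal in `B`. -/
def PerinormalIn {B : Type*} [CommRing B] (A : Subring B) : Prop :=
  ∀ (p : Ideal A) (hp : p.IsPrime), PeriAt A p hp

/-- An integral domain `R` is perinormal:  every local overring of `R`
(local ring between `R` and its fraction field) satisfying going-down over `R`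
is a localization of `R` at a prime ideal. -/
def PerinormalDomain (R : Type*) [CommRing R] [IsDomain R] : Prop :=
  ∀ (T : Subring (FractionRing R)) (hT : (algebraMap R (FractionRing R)).range ≤ T),
    IsLocalRing T →
    GoingDownHom ((algebraMap R (FractionRing R)).codRestrict T (fun x => hT ⟨x, rfl⟩)) →
    ∃ p : Ideal R, p.IsPrime ∧
      (T : Set (FractionRing R)) =
        {x | ∃ r s : R, s ∉ p ∧
          x * algebraMap R (FractionRing R) s = algebraMap R (FractionRing R) r}

/-- A subring `A ⊆ B` is apparently fragile in `B`: for every ring `C` with `A ⊊ C ⊆ B`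
there are a minimal prime `p` of `A` and distinct primes `P, Q` of `C` contracting to `p`. -/
def ApparentlyFragile {B : Type*} [CommRing B] (A : Subring B) : Prop :=
  ∀ (C : Subring B) (hAC : A ≤ C), A ≠ C →
    ∃ p ∈ minimalPrimes A, ∃ P Q : Ideal C, P.IsPrime ∧ Q.IsPrime ∧ P ≠ Q ∧
      P.comap (Subring.inclusion hAC) = p ∧ Q.comap (Subring.inclusion hAC) = p

/-- A subring `A ⊆ B` is fragile in `B`: for every prime `P` of `A`, the extension
`A_P ⊆ B_{A∖P}` is apparently fragile. -/
def Fragile {B : Type*} [CommRing B] (A : Subring B) : Prop :=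
  ∀ (P : Ideal A) (hP : P.IsPrime),
    haveI := hP
    ApparentlyFragile (locMap A P.primeCompl).range

/-- A subring `A ⊆ B` is globally fragile in `B`: for every multiplicative subset `W` of `A`,
the extension `A_W ⊆ B_W` is apparently fragile. -/
def GloballyFragile {B : Type*} [CommRing B] (A : Subring B) : Prop :=
  ∀ W : Submonoid A, ApparentlyFragile (locMap A W).range

/-- An integral domain `S` is a generalized Krull domain: (i) `S` is the intersection of its
localizations at height-one primes (inside its fraction field), (ii) every nonzero element lies
in only finitely many height-one primes, and (iii) the localization at every height-one prime
is a valuation ring. -/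
def IsGenKrull (S : Type*) [CommRing S] [IsDomain S] : Prop :=
  (∀ x : FractionRing S,
      (∀ (p : Ideal S) (hp : p.IsPrime), Order.height (⟨p, hp⟩ : PrimeSpectrum S) = 1 →
        ∃ a s : S, s ∉ p ∧ x * algebraMap S (FractionRing S) s = algebraMap S (FractionRing S) a) →
      ∃ r : S, algebraMap S (FractionRing S) r = x) ∧
  (∀ s : S, s ≠ 0 →
      {p : Ideal S | ∃ hp : p.IsPrime, Order.height (⟨p, hp⟩ : PrimeSpectrum S) = 1 ∧ s ∈ p}.Finite) ∧
  (∀ (p : Ideal S) (hp : p.IsPrime), Order.height (⟨p, hp⟩ : PrimeSpectrum S) = 1 →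
      haveI := hp
      ValuationRing (Localization.AtPrime p))

/-- A prime ideal `Q` has height one. -/
def HeightOne {S : Type*} [CommRing S] (Q : Ideal S) : Prop :=
  ∃ hQ : Q.IsPrime, Order.height (⟨Q, hQ⟩ : PrimeSpectrum S) = 1

/-! If `J ⊄ p`, any `j ∈ J ∖ p` satisfies `jB ⊆ A`, so `A_p = B_{A∖p}` and perinormality at `p` is
vacuous. If `J ⊆ p`, reduction modulo `J` gives a commutative square from `A_p → B_{A∖p}` to
`(A/J)_{p/J} → (B/J)_{(A/J)∖(p/J)}` whose left side is surjective and whose right side `φ` has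
kernel inside the image of `A_p` (this is where `J ⊆ A` enters). For an intermediate ring `T`, the
image `φ(T)` is a quotient of `T`, so it inherits locality, the contraction of the maximal ideal and
going-down; perinormality of `A/J` forces `φ(T) = (A/J)_{p/J}`, and since `ker φ ⊆ A_p` this lifts
to `T = A_p`. -/

open Function IsLocalRing

section PerinormalHom

variable {R S R' S' : Type*} [CommRing R] [CommRing S] [CommRing R'] [CommRing S']

def RingHom.subringMap (f : R →+* S) (s : Subring R) : s →+* s.map f :=
  (f.comp s.subtype).codRestrict _ fun x => ⟨x, x.2, rfl⟩

theorem RingHom.subringMap_surjective (f : R →+* S) (s : Subring R) :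
    Surjective (f.subringMap s) := by
  rintro ⟨_, x, hx, rfl⟩
  exact ⟨⟨x, hx⟩, rfl⟩

theorem RingHom.ker_subringMap (f : R →+* S) (s : Subring R) :
    RingHom.ker (f.subringMap s) = (RingHom.ker f).comap s.subtype := by
  ext x
  exact Subtype.ext_iff

section Square

variable {f : R →+* S} {f' : R' →+* S'} {ψ : R →+* R'} {π : S →+* S'}

theorem GoingDownHom.of_surjective_square (hψ : Surjective ψ) (hπ : Surjective π)
    (hsq : π.comp f = f'.comp ψ) (hker : RingHom.ker π ≤ (RingHom.ker ψ).map f)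
    (hf : GoingDownHom f) : GoingDownHom f' := by
  intro q₁ q₂ hq₁ hq₂ hle Q₂ hQ₂ hc₂
  obtain ⟨Q₁, hQ₁, hQ₁₂, hc₁⟩ := hf (q₁.comap ψ) (q₂.comap ψ) (hq₁.comap ψ) (hq₂.comap ψ)
    (Ideal.comap_mono hle) (Q₂.comap π) (hQ₂.comap π)
    (by rw [Ideal.comap_comap, hsq, ← Ideal.comap_comap, hc₂])
  have hkerQ₁ : RingHom.ker π ≤ Q₁ :=
    hker.trans (Ideal.map_le_iff_le_comap.mpr (hc₁ ▸ Ideal.ker_le_comap ψ))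
  refine ⟨Q₁.map π, Ideal.map_isPrime_of_surjective hπ hkerQ₁,
    Ideal.map_le_iff_le_comap.mpr hQ₁₂, Ideal.comap_injective_of_surjective ψ hψ ?_⟩
  rw [Ideal.comap_comap, ← hsq, ← Ideal.comap_comap, Ideal.comap_map_of_surjective' π hπ,
    sup_eq_left.mpr hkerQ₁, hc₁]

theorem comap_eq_maximalIdeal_of_surjective_square [IsLocalRing R] [IsLocalRing R']
    (hψ : Surjective ψ) (hπ : Surjective π) (hsq : π.comp f = f'.comp ψ)
    (hf : ∀ M : Ideal S, M.IsMaximal → M.comap f = maximalIdeal R)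
    (M' : Ideal S') [M'.IsMaximal] : M'.comap f' = maximalIdeal R' := by
  apply Ideal.comap_injective_of_surjective ψ hψ
  rw [Ideal.comap_comap, ← hsq, ← Ideal.comap_comap,
    hf _ (Ideal.comap_isMaximal_of_surjective π hπ)]
  exact (eq_maximalIdeal (Ideal.comap_isMaximal_of_surjective ψ hψ (K := maximalIdeal R'))).symm

end Square

-- `PeriAt A p hp` unfolds to `IsPerinormalHom (locMap A p.primeCompl)`.
def IsPerinormalHom [IsLocalRing R] (g : R →+* S) : Prop :=
  ∀ (T : Subring S) (hT : g.range ≤ T), IsLocalRing T →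
    (∀ M : Ideal T, M.IsMaximal →
      M.comap (g.codRestrict T fun x => hT ⟨x, rfl⟩) = maximalIdeal R) →
    GoingDownHom (g.codRestrict T fun x => hT ⟨x, rfl⟩) → T = g.range

theorem IsPerinormalHom.of_surjective [IsLocalRing R] {g : R →+* S} (hg : Surjective g) :
    IsPerinormalHom g := fun _ hT _ _ _ =>
  le_antisymm ((g.range_eq_top_of_surjective hg).symm ▸ le_top) hT

theorem IsPerinormalHom.of_surjective_square [IsLocalRing R] [IsLocalRing R']
    {g : R →+* S} {g' : R' →+* S'} {ψ : R →+* R'} {φ : S →+* S'} (hψ : Surjective ψ)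
    (hsq : φ.comp g = g'.comp ψ) (hker : (RingHom.ker φ : Set S) ⊆ g '' RingHom.ker ψ)
    (h : IsPerinormalHom g') : IsPerinormalHom g := by
  intro T hT _ hTmax hTgd
  have hrange : g'.range = g.range.map φ := by
    rw [RingHom.map_range, hsq]
    ext x
    constructor
    · rintro ⟨y, rfl⟩
      obtain ⟨z, rfl⟩ := hψ y
      exact ⟨z, rfl⟩
    · rintro ⟨z, rfl⟩
      exact ⟨ψ z, rfl⟩
  have hT' : g'.range ≤ T.map φ := hrange ▸ (Subring.gc_map_comap φ).monotone_l hT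
  set π := φ.subringMap T
  have hπ : Surjective π := φ.subringMap_surjective T
  have hsqT : π.comp (g.codRestrict T fun x => hT ⟨x, rfl⟩) =
      (g'.codRestrict _ fun x => hT' ⟨x, rfl⟩).comp ψ :=
    RingHom.ext fun z => Subtype.ext (RingHom.congr_fun hsq z)
  have hkerT : RingHom.ker π ≤ (RingHom.ker ψ).map (g.codRestrict T fun x => hT ⟨x, rfl⟩) := by
    intro t ht
    obtain ⟨z, hz, hzt⟩ := hker (show φ t = 0 from congrArg Subtype.val ht)
    have hzt' : g.codRestrict T (fun x => hT ⟨x, rfl⟩) z = t := Subtype.ext hzt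
    exact hzt' ▸ Ideal.mem_map_of_mem _ hz
  have hkerT_le : RingHom.ker π ≤ maximalIdeal T :=
    hkerT.trans <| Ideal.map_le_iff_le_comap.mpr <|
      (hTmax _ (maximalIdeal.isMaximal T)).symm ▸ le_maximalIdeal (RingHom.ker_ne_top ψ)
  have : Nontrivial (T.map φ) := nontrivial_of_ne 1 0 fun h10 =>
    (maximalIdeal.isMaximal T).ne_top <| (Ideal.eq_top_iff_one _).mpr <|
      hkerT_le (by rw [RingHom.mem_ker, map_one, h10])
  have hT'eq := h (T.map φ) hT' (.of_surjective' π hπ)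
    (fun M' _ => comap_eq_maximalIdeal_of_surjective_square hψ hπ hsqT hTmax M')
    (hTgd.of_surjective_square hψ hπ hsqT hkerT)
  refine le_antisymm (fun t ht => ?_) hT
  obtain ⟨_, ⟨y, rfl⟩, hy⟩ : φ t ∈ g.range.map φ := hrange ▸ hT'eq ▸ ⟨t, ht, rfl⟩
  obtain ⟨z, -, hz⟩ := hker (show t - g y ∈ RingHom.ker φ by
    rw [RingHom.mem_ker, map_sub, hy, sub_self])
  exact ⟨y + z, by rw [map_add, hz, add_sub_cancel]⟩

end PerinormalHom

theorem Localization.localRingHom_surjective {R P : Type*} [CommRing R] [CommRing P]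
    (I : Ideal R) [I.IsPrime] (J : Ideal P) [J.IsPrime] {f : R →+* P} (hf : Surjective f)
    (hIJ : I = J.comap f) : Surjective (Localization.localRingHom I J f hIJ) := by
  intro z
  obtain ⟨⟨x, s⟩, rfl⟩ := IsLocalization.mk'_surjective J.primeCompl z
  obtain ⟨a, rfl⟩ := hf x
  obtain ⟨t, ht⟩ := hf s
  have htI : t ∈ I.primeCompl := fun h => s.2 (ht ▸ Ideal.mem_comap.mp (hIJ ▸ h))
  refine ⟨IsLocalization.mk' _ a ⟨t, htI⟩, ?_⟩
  rw [Localization.localRingHom_mk']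
  exact congrArg (IsLocalization.mk' _ (f a)) (Subtype.ext ht)

section LocMap

variable {B : Type*} [CommRing B] (A : Subring B)

theorem locMap_mk' (W : Submonoid A) (a : A) (w : W) :
    locMap A W (IsLocalization.mk' _ a w) =
      IsLocalization.mk' _ (a : B) (⟨w, W.le_comap_map w.2⟩ : W.map A.subtype) :=
  IsLocalization.map_mk' _ a w

theorem locMap_surjective_of_mul_mem {W : Submonoid A} {w : A} (hw : w ∈ W)
    (hwA : ∀ b : B, (w : B) * b ∈ A) : Surjective (locMap A W) := by
  intro x
  obtain ⟨⟨b, ⟨_, s, hs, rfl⟩⟩, rfl⟩ := IsLocalization.mk'_surjective (W.map A.subtype) x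
  refine ⟨IsLocalization.mk' _ (⟨w * b, hwA b⟩ : A) ⟨w * s, W.mul_mem hw hs⟩, ?_⟩
  rw [locMap_mk']
  exact IsLocalization.mk'_eq_iff_eq.mpr
      (congrArg _ (by simp only [Subring.coe_mul, Subring.coe_subtype]; ring))

variable (J : Ideal B) (p : Ideal A) [p.IsPrime] (q : Ideal (A.map (Ideal.Quotient.mk J)))
  [q.IsPrime]

theorem map_primeCompl_le_comap_map_primeCompl
    (hpq : p = q.comap ((Ideal.Quotient.mk J).subringMap A)) :
    p.primeCompl.map A.subtype ≤
      (q.primeCompl.map (A.map (Ideal.Quotient.mk J)).subtype).comap (Ideal.Quotient.mk J) := by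
  rintro _ ⟨w, hw, rfl⟩
  exact ⟨(Ideal.Quotient.mk J).subringMap A w, fun h => hw (hpq ▸ h), rfl⟩

noncomputable def locQuotientMap (hpq : p = q.comap ((Ideal.Quotient.mk J).subringMap A)) :
    Localization (p.primeCompl.map A.subtype) →+*
      Localization (q.primeCompl.map (A.map (Ideal.Quotient.mk J)).subtype) :=
  IsLocalization.map _ (Ideal.Quotient.mk J) (map_primeCompl_le_comap_map_primeCompl A J p q hpq)

theorem locQuotientMap_comp_locMap (hpq : p = q.comap ((Ideal.Quotient.mk J).subringMap A)) :
    (locQuotientMap A J p q hpq).comp (locMap A p.primeCompl) =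
      (locMap _ q.primeCompl).comp (Localization.localRingHom p q _ hpq) := by
  refine IsLocalization.ringHom_ext p.primeCompl (RingHom.ext fun a => ?_)
  simp only [locQuotientMap, locMap, RingHom.coe_comp, comp_apply, IsLocalization.lift_eq,
    Subring.coe_subtype, IsLocalization.map_eq, Localization.localRingHom_to_map]
  rfl

theorem ker_locQuotientMap_subset (hpq : p = q.comap ((Ideal.Quotient.mk J).subringMap A))
    (hJA : (J : Set B) ⊆ A) :
    (RingHom.ker (locQuotientMap A J p q hpq) : Set _) ⊆
      locMap A p.primeCompl '' RingHom.ker (Localization.localRingHom p q _ hpq) := by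
  intro x hx
  obtain ⟨⟨b, ⟨_, w, hw, rfl⟩⟩, rfl⟩ :=
    IsLocalization.mk'_surjective (p.primeCompl.map A.subtype) x
  rw [SetLike.mem_coe, RingHom.mem_ker, locQuotientMap, IsLocalization.map_mk',
    IsLocalization.mk'_eq_zero_iff] at hx
  obtain ⟨⟨_, vbar, hvbar, rfl⟩, hm⟩ := hx
  obtain ⟨v, rfl⟩ := (Ideal.Quotient.mk J).subringMap_surjective A vbar
  have hv : v ∈ p.primeCompl := fun h => hvbar (Ideal.mem_comap.mp (hpq ▸ h))
  have hvb : (v : B) * b ∈ J := Ideal.Quotient.eq_zero_iff_mem.mp hm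
  refine ⟨IsLocalization.mk' _ (⟨v * b, hJA hvb⟩ : A) ⟨v * w, p.primeCompl.mul_mem hv hw⟩,
    ?_, ?_⟩
  · have hvb' : (Ideal.Quotient.mk J).subringMap A ⟨v * b, hJA hvb⟩ = 0 :=
      Subtype.ext (Ideal.Quotient.eq_zero_iff_mem.mpr hvb)
    rw [SetLike.mem_coe, RingHom.mem_ker, Localization.localRingHom_mk', hvb',
      IsLocalization.mk'_zero]
  · rw [locMap_mk']
    exact IsLocalization.mk'_eq_iff_eq.mpr
      (congrArg _ (by simp only [Subring.coe_mul, Subring.coe_subtype]; ring))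

theorem periAt_of_periAt_quotient (hpq : p = q.comap ((Ideal.Quotient.mk J).subringMap A))
    (hJA : (J : Set B) ⊆ A)     (h : PeriAt (A.map (Ideal.Quotient.mk J)) q ‹_›) : PeriAt A p ‹_› :=
  IsPerinormalHom.of_surjective_square
    (Localization.localRingHom_surjective p q ((Ideal.Quotient.mk J).subringMap_surjective A) hpq)
    (locQuotientMap_comp_locMap A J p q hpq) (ker_locQuotientMap_subset A J p q hpq hJA) h

end LocMap

/-- Let `A ⊆ B` be a ring extension and `J` an ideal of `B` contained in `A`
(so `J` is a common ideal of `A` and `B`).  If `A/J` is perinormal in `B/J`,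
then `A` is perinormal in `B`. -/
theorem perinormalIn_of_perinormalIn_quotient {B : Type*} [CommRing B]
    (A : Subring B) (J : Ideal B) (hJA : (J : Set B) ⊆ A)
    (h : PerinormalIn (A.map (Ideal.Quotient.mk J))) :
    PerinormalIn A := by
  intro p hp
  by_cases hJp : J.comap A.subtype ≤ p
  · set ρ := (Ideal.Quotient.mk J).subringMap A
    have hρ : Surjective ρ := (Ideal.Quotient.mk J).subringMap_surjective A
    have hker : RingHom.ker ρ ≤ p := by
      rwa [RingHom.ker_subringMap, Ideal.mk_ker]
    have hpq : p = (p.map ρ).comap ρ := by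
      rw [Ideal.comap_map_of_surjective' _ hρ, sup_eq_left.mpr hker]
    have := Ideal.map_isPrime_of_surjective hρ hker
    exact periAt_of_periAt_quotient A J p _ hpq hJA (h _ this)
  · obtain ⟨j, hjJ, hjp⟩ := SetLike.not_le_iff_exists.mp hJp
    exact IsPerinormalHom.of_surjective
      (locMap_surjective_of_mul_mem A hjp fun b => hJA (J.mul_mem_right b hjJ))
end

section
/- Let D be an integral domain with fraction field k, and let V be a valuation domain together with a surjective ring map V → k whose kernel is the maximal ideal m of V (i.e., V has residue field k). Let R be the pullback of the diagram D → k ← V, that is, R = {v ∈ V : the image of v in k lies in D} (equivalently R = D + m). Then R is perinormal if and only if D is perinormal. -/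
/-!
Let `m` be the maximal ideal of `V` and `R = π⁻¹(D)`. Since `m ⊆ R` and `R / m ≅ D`, the ring `V`
is the localization of `R` at `m ∩ R`; hence `Frac R = Frac V`, and every prime of `R` either
contains `m ∩ R` or is contained in it.

Rings `W` with `R ⊆ W ⊆ V` correspond to rings between `D` and `k` through `W ↦ π(W)`, and this
correspondence preserves being local, going-down over the base (through the surjection
`W → π(W)` with kernel `m` for primes containing `m ∩ R`, and by extending to `V` for primes
inside `m`), and being the localization at a prime containing `m ∩ R`. A local overring of `R`
not contained in `V` contains `V`, because `V` is a valuation ring, and is then visibly a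
localization of `R`. Conversely, if `π⁻¹(T)` is a localization `R_P` with `P ⊉ m ∩ R`, then
`P ⊆ m`, so `R_P ⊇ V` and `T = k` is the localization of `D` at `0`.
-/

open IsLocalRing

section GoingDown

variable {A B C : Type*} [CommRing A] [CommRing B] [CommRing C]

theorem GoingDownHom.comp {f : A →+* B} {g : B →+* C} (hf : GoingDownHom f)
    (hg : GoingDownHom g) : GoingDownHom (g.comp f) := by
  intro p₁ p₂ hp₁ hp₂ hle Q₂ hQ₂ hQ₂p
  obtain ⟨P₁, hP₁, hP₁le, hP₁p⟩ := hf p₁ p₂ hp₁ hp₂ hle (Q₂.comap g) (hQ₂.comap g) hQ₂p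
  obtain ⟨Q₁, hQ₁, hQ₁le, hQ₁P⟩ := hg P₁ (Q₂.comap g) hP₁ (hQ₂.comap g) hP₁le Q₂ hQ₂ rfl
  exact ⟨Q₁, hQ₁, hQ₁le, by rw [← Ideal.comap_comap, hQ₁P, hP₁p]⟩

theorem RingEquiv.goingDownHom (e : A ≃+* B) : GoingDownHom (e : A →+* B) := by
  intro p₁ p₂ hp₁ _ hle Q₂ _ hQ₂p
  refine ⟨p₁.comap (e.symm : B →+* A), hp₁.comap _, fun x hx => ?_, ?_⟩
  · have hx₂ := hle hx
    rw [← hQ₂p, Ideal.mem_comap] at hx₂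
    simpa using hx₂
  · ext
    simp

variable {A' B' : Type*} [CommRing A'] [CommRing B']
  {f : A →+* B} {g : A' →+* B'} {ρ : A →+* A'} {ψ : B →+* B'}

theorem GoingDownHom.of_comm_sq (hρ : Function.Surjective ρ) (hψ : Function.Surjective ψ)
    (hcomm : ψ.comp f = g.comp ρ) (hker : RingHom.ker ψ ≤ (RingHom.ker ρ).map f)
    (hf : GoingDownHom f) : GoingDownHom g := by
  intro p₁ p₂ hp₁ hp₂ hle Q₂ hQ₂ hQ₂p
  have hcomap : ∀ Q : Ideal B', (Q.comap ψ).comap f = (Q.comap g).comap ρ := fun Q => by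
    rw [Ideal.comap_comap, Ideal.comap_comap, hcomm]
  obtain ⟨Q₁, hQ₁, hQ₁le, hQ₁p⟩ := hf (p₁.comap ρ) (p₂.comap ρ) (hp₁.comap ρ) (hp₂.comap ρ)
    (Ideal.comap_mono hle) (Q₂.comap ψ) (hQ₂.comap ψ) (by rw [hcomap, hQ₂p])
  have hψQ₁ : RingHom.ker ψ ≤ Q₁ := hker.trans <| Ideal.map_le_iff_le_comap.2 <| by
    rw [hQ₁p]
    exact Ideal.comap_mono bot_le
  have hQ₁' : (Q₁.map ψ).comap ψ = Q₁ := by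
    rw [Ideal.comap_map_of_surjective' ψ hψ, sup_eq_left.2 hψQ₁]
  refine ⟨Q₁.map ψ, Ideal.map_isPrime_of_surjective hψ hψQ₁,
    Ideal.map_le_iff_le_comap.2 hQ₁le, Ideal.comap_injective_of_surjective ρ hρ ?_⟩
  rw [← hcomap, hQ₁', hQ₁p]

theorem GoingDownHom.exists_of_comm_sq (hρ : Function.Surjective ρ) (hψ : Function.Surjective ψ)
    (hcomm : ψ.comp f = g.comp ρ) (hker : RingHom.ker ψ ≤ (RingHom.ker ρ).map f)
    (hg : GoingDownHom g) {p₁ p₂ : Ideal A} [p₁.IsPrime] [p₂.IsPrime] (hle : p₁ ≤ p₂)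
    (hρp₁ : RingHom.ker ρ ≤ p₁) {Q₂ : Ideal B} [Q₂.IsPrime] (hQ₂p : Q₂.comap f = p₂) :
    ∃ Q₁ : Ideal B, Q₁.IsPrime ∧ Q₁ ≤ Q₂ ∧ Q₁.comap f = p₁ := by
  have hcomap : ∀ Q : Ideal B', (Q.comap ψ).comap f = (Q.comap g).comap ρ := fun Q => by
    rw [Ideal.comap_comap, Ideal.comap_comap, hcomm]
  have hρp₂ : RingHom.ker ρ ≤ p₂ := hρp₁.trans hle
  have hψQ₂ : RingHom.ker ψ ≤ Q₂ := hker.trans (Ideal.map_le_iff_le_comap.2 (hQ₂p ▸ hρp₂))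
  have hp : ∀ p : Ideal A, RingHom.ker ρ ≤ p → (p.map ρ).comap ρ = p := fun p hp => by
    rw [Ideal.comap_map_of_surjective' ρ hρ, sup_eq_left.2 hp]
  have hQ₂' : (Q₂.map ψ).comap ψ = Q₂ := by
    rw [Ideal.comap_map_of_surjective' ψ hψ, sup_eq_left.2 hψQ₂]
  obtain ⟨Q₁, hQ₁, hQ₁le, hQ₁p⟩ := hg (p₁.map ρ) (p₂.map ρ)
    (Ideal.map_isPrime_of_surjective hρ hρp₁) (Ideal.map_isPrime_of_surjective hρ hρp₂)
    (Ideal.map_mono hle) (Q₂.map ψ) (Ideal.map_isPrime_of_surjective hψ hψQ₂)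
    (Ideal.comap_injective_of_surjective ρ hρ (by rw [← hcomap, hQ₂', hQ₂p, hp p₂ hρp₂]))
  refine ⟨Q₁.comap ψ, hQ₁.comap ψ, hQ₂' ▸ Ideal.comap_mono hQ₁le, ?_⟩
  rw [hcomap, hQ₁p, hp p₁ hρp₁]

end GoingDown

theorem Set.image_eq_iff_eq_preimage {α β : Type*} {f : α → β} {s : Set α} {t : Set β}
    (hs : f ⁻¹' (f '' s) = s) (ht : t ⊆ Set.range f) : f '' s = t ↔ s = f ⁻¹' t := by
  constructor
  · rintro rfl
    exact hs.symm
  · rintro rfl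
    exact Set.image_preimage_eq_of_subset ht

theorem Subring.isLocalRing_map_iff {A B : Type*} [CommRing A] [CommRing B] {f : A →+* B}
    (hf : Function.Injective f) (s : Subring A) : IsLocalRing (s.map f) ↔ IsLocalRing s :=
  ⟨fun _ => (s.equivMapOfInjective f hf).symm.isLocalRing,
    fun _ => (s.equivMapOfInjective f hf).isLocalRing⟩

def Ideal.localizationIn {A : Type*} [CommRing A] (K : Type*) [CommRing K] [Algebra A K]
    (p : Ideal A) : Set K :=
  {x | ∃ r s : A, s ∉ p ∧ x * algebraMap A K s = algebraMap A K r}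

theorem Ideal.localizationIn_bot {A K : Type*} [CommRing A] [Nontrivial A] [CommRing K]
    [Algebra A K] [IsFractionRing A K] : (⊥ : Ideal A).localizationIn K = Set.univ := by
  refine Set.eq_univ_of_forall fun x => ?_
  obtain ⟨⟨r, s⟩, hx⟩ := IsLocalization.surj (nonZeroDivisors A) x
  exact ⟨r, s, by simp, hx⟩

namespace DPlusM

section Pullback

variable {D V : Type*} [CommRing D] [CommRing V]

abbrev pullback (π : V →+* FractionRing D) : Subring V :=
  (algebraMap D (FractionRing D)).range.comap π

noncomputable def proj (π : V →+* FractionRing D) : pullback π →+* D :=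
  (RingEquiv.ofBijective (algebraMap D (FractionRing D)).rangeRestrict
      ⟨RingHom.injective_codRestrict.2 (IsFractionRing.injective D (FractionRing D)),
        RingHom.rangeRestrict_surjective _⟩).symm.toRingHom.comp
    (π.restrict (pullback π) _ fun _ hv => hv)

theorem algebraMap_proj (π : V →+* FractionRing D) (r : pullback π) :
    algebraMap D (FractionRing D) (proj π r) = π r := by
  simp only [proj, RingHom.comp_apply, RingEquiv.toRingHom_eq_coe, RingHom.coe_coe]
  exact congrArg Subtype.val ((RingEquiv.ofBijective (algebraMap D (FractionRing D)).rangeRestrict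
    _).apply_symm_apply (π.restrict (pullback π) _ _ r))

instance [IsDomain D] (π : V →+* FractionRing D) : (RingHom.ker (proj π)).IsPrime :=
  RingHom.ker_isPrime _

noncomputable def mapRestrict (π : V →+* FractionRing D) (W : Subring V) : W →+* W.map π :=
  π.restrict W (W.map π) fun _ hv => Subring.mem_map.2 ⟨_, hv, rfl⟩

theorem mapRestrict_surjective (π : V →+* FractionRing D) (W : Subring V) :
    Function.Surjective (mapRestrict π W) := by
  rintro ⟨_, w, hw, rfl⟩
  exact ⟨⟨w, hw⟩, rfl⟩

variable {π : V →+* FractionRing D} {ι : V →+* FractionRing (pullback π)} {W : Subring V}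

theorem proj_surjective (hsurj : Function.Surjective π) : Function.Surjective (proj π) :=
  fun d => by
    obtain ⟨v, hv⟩ := hsurj (algebraMap D (FractionRing D) d)
    exact ⟨⟨v, d, hv.symm⟩,
      IsFractionRing.injective D (FractionRing D) (by rw [algebraMap_proj, hv])⟩

theorem preimage_localizationIn (hsurj : Function.Surjective π) (hι : Function.Injective ι)
    (hιR : ∀ r : pullback π, ι r = algebraMap _ _ r) {P : Ideal (pullback π)}
    (hP : RingHom.ker (proj π) ≤ P) :
    ι ⁻¹' P.localizationIn (FractionRing (pullback π)) =
      π ⁻¹' (P.map (proj π)).localizationIn (FractionRing D) := by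
  have hPmap : ∀ s, proj π s ∈ P.map (proj π) ↔ s ∈ P := fun s => by
    rw [← Ideal.mem_comap, Ideal.comap_map_of_surjective' _ (proj_surjective hsurj),
      sup_eq_left.2 hP]
  ext v
  constructor
  · rintro ⟨r, s, hs, hv⟩
    have hvs : v * s = r := hι (by rw [map_mul, hιR, hιR, hv])
    exact ⟨proj π r, proj π s, (hPmap s).not.2 hs,
      by rw [algebraMap_proj, algebraMap_proj, ← map_mul, hvs]⟩
  · rintro ⟨d, e, he, hv⟩
    obtain ⟨s, rfl⟩ := proj_surjective hsurj e
    refine ⟨⟨v * s, d, by rw [map_mul, ← algebraMap_proj]; exact hv.symm⟩, s,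
      (hPmap s).not.1 he, ?_⟩
    rw [← hιR, ← hιR, ← map_mul]

theorem goingDownHom_codRestrict_map_of_injective_iff (hι : Function.Injective ι)
    (hιR : ∀ r : pullback π, ι r = algebraMap _ _ r) (hW : pullback π ≤ W)
    (h : ∀ r, algebraMap (pullback π) _ r ∈ W.map ι) :
    GoingDownHom ((algebraMap (pullback π) _).codRestrict (W.map ι) h) ↔
      GoingDownHom (Subring.inclusion hW) := by
  set e := W.equivMapOfInjective ι hι
  have he : (algebraMap (pullback π) _).codRestrict (W.map ι) h =
      (e : W →+* W.map ι).comp (Subring.inclusion hW) :=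
    RingHom.ext fun r => Subtype.ext (hιR r).symm
  rw [he]
  refine ⟨fun hGD => ?_, fun hGD => hGD.comp e.goingDownHom⟩
  convert hGD.comp e.symm.goingDownHom
  ext
  simp

end Pullback

section LocalRing

variable {D V : Type*} [CommRing D] [CommRing V] [IsLocalRing V] {π : V →+* FractionRing D}
  {ι : V →+* FractionRing (pullback π)} {W : Subring V}

theorem mem_pullback_of_mem_maximalIdeal (hker : RingHom.ker π = maximalIdeal V) {v : V}
    (hv : v ∈ maximalIdeal V) : v ∈ pullback π :=
  ⟨0, by rw [map_zero, RingHom.mem_ker.1 (hker ▸ hv)]⟩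

theorem mem_ker_proj (hker : RingHom.ker π = maximalIdeal V) (r : pullback π) :
    r ∈ RingHom.ker (proj π) ↔ (r : V) ∈ maximalIdeal V := by
  rw [RingHom.mem_ker, ← hker, RingHom.mem_ker, ← algebraMap_proj,
    map_eq_zero_iff _ (IsFractionRing.injective D (FractionRing D))]

theorem notMem_ker_proj (hker : RingHom.ker π = maximalIdeal V) (r : pullback π) :
    r ∉ RingHom.ker (proj π) ↔ IsUnit (r : V) := by
  rw [mem_ker_proj hker, notMem_maximalIdeal]

theorem exists_mul_eq [IsDomain D] (hsurj : Function.Surjective π)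
    (hker : RingHom.ker π = maximalIdeal V) (v : V) :
    ∃ r s : pullback π, IsUnit (s : V) ∧ v * s = r := by
  obtain ⟨⟨a, b⟩, hab⟩ := IsLocalization.surj (nonZeroDivisors D) (π v)
  obtain ⟨s, hs⟩ := proj_surjective hsurj b
  refine ⟨⟨v * s, a, by rw [map_mul, ← algebraMap_proj, hs]; exact hab.symm⟩, s, ?_, rfl⟩
  rw [← notMem_ker_proj hker, RingHom.mem_ker, hs]
  exact nonZeroDivisors.coe_ne_zero b

theorem isLocalization_ker_proj [IsDomain D] (hsurj : Function.Surjective π)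
    (hker : RingHom.ker π = maximalIdeal V) :
    IsLocalization.AtPrime V (RingHom.ker (proj π)) := by
  refine (isLocalization_iff _ _).2 ⟨fun s => (notMem_ker_proj hker s).1 s.2, fun v => ?_,
    fun h => ⟨1, by rw [Subtype.ext h]⟩⟩
  obtain ⟨r, s, hs, hv⟩ := exists_mul_eq hsurj hker v
  exact ⟨(r, ⟨s, (notMem_ker_proj hker s).2 hs⟩), hv⟩

theorem le_ker_proj_of_not_le (hker : RingHom.ker π = maximalIdeal V) {P : Ideal (pullback π)}
    [P.IsPrime] (h : ¬ RingHom.ker (proj π) ≤ P) : P ≤ RingHom.ker (proj π) := by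
  obtain ⟨x, hx, hxP⟩ := Set.not_subset.1 h
  intro y hy
  by_contra hyu
  obtain ⟨u, hu⟩ := ((notMem_ker_proj hker y).1 hyu).exists_right_inv
  have hxu : (x : V) * u ∈ maximalIdeal V :=
    Ideal.mul_mem_right _ _ ((mem_ker_proj hker x).1 hx)
  have hxy : x = y * ⟨_, mem_pullback_of_mem_maximalIdeal hker hxu⟩ := by
    ext
    push_cast
    linear_combination -(x : V) * hu
  exact hxP (hxy ▸ Ideal.mul_mem_right _ _ hy)

theorem comap_map_of_pullback_le (hker : RingHom.ker π = maximalIdeal V) (hW : pullback π ≤ W) :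
    (W.map π).comap π = W :=
  Subring.comap_map_eq_self fun _ hv =>
    hW (mem_pullback_of_mem_maximalIdeal hker (hker ▸ RingHom.mem_ker.2 hv))

theorem isLocalRing_map_iff [IsDomain D] (hker : RingHom.ker π = maximalIdeal V)
    (hW : pullback π ≤ W) : IsLocalRing (W.map π) ↔ IsLocalRing W := by
  refine ⟨fun _ => ?_, fun _ => IsLocalRing.of_surjective' _ (mapRestrict_surjective π W)⟩
  have : IsLocalHom (mapRestrict π W) := ⟨fun w hw => ?_⟩
  · exact (mapRestrict π W).domain_isLocalRing
  have hw0 : π w ≠ 0 := (hw.map (W.map π).subtype).ne_zero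
  obtain ⟨u, hu⟩ := (notMem_maximalIdeal.1 (hker ▸ mt RingHom.mem_ker.1 hw0)).exists_right_inv
  have huW : u ∈ W := by
    have hwinv : π w * ((hw.unit⁻¹ : (W.map π)ˣ) : FractionRing D) = 1 :=
      congrArg Subtype.val hw.mul_val_inv
    have hπu : π u = ((hw.unit⁻¹ : (W.map π)ˣ) : FractionRing D) :=
      mul_left_cancel₀ hw0 (by rw [← map_mul, hu, map_one, hwinv])
    rw [← comap_map_of_pullback_le hker hW, Subring.mem_comap, hπu]
    exact (hw.unit⁻¹ : (W.map π)ˣ).val.2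
  exact IsUnit.of_mul_eq_one ⟨u, huW⟩ (Subtype.ext hu)

/-- `p₁` extends to a prime of the localization `V` of `R`; this prime lies in `m ⊆ R`, so its
trace on `W` lies over `p₁`, and inside `Q₂` because `p₁ ≤ p₂`. -/
theorem exists_prime_le_of_le_ker_proj [IsDomain D] (hsurj : Function.Surjective π)
    (hker : RingHom.ker π = maximalIdeal V) (hW : pullback π ≤ W) {p₁ p₂ : Ideal (pullback π)}
    [p₁.IsPrime] (h₁ : p₁ ≤ RingHom.ker (proj π)) (hle : p₁ ≤ p₂) {Q₂ : Ideal W}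
    (hQ₂ : Q₂.comap (Subring.inclusion hW) = p₂) :
    ∃ Q₁ : Ideal W, Q₁.IsPrime ∧ Q₁ ≤ Q₂ ∧ Q₁.comap (Subring.inclusion hW) = p₁ := by
  have := isLocalization_ker_proj hsurj hker
  have hdisj : Disjoint ((RingHom.ker (proj π)).primeCompl : Set (pullback π)) p₁ :=
    Set.disjoint_left.2 fun _ hs hs₁ => hs (h₁ hs₁)
  set P := p₁.map (algebraMap (pullback π) V)
  have hP : P.IsPrime := IsLocalization.isPrime_of_isPrime_disjoint _ V p₁ ‹_› hdisj
  have hPp : P.comap (algebraMap (pullback π) V) = p₁ :=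
    IsLocalization.under_map_of_isPrime_disjoint _ V ‹_› hdisj
  have hPm : P ≤ maximalIdeal V :=
    Ideal.map_le_iff_le_comap.2 fun r hr => (mem_ker_proj hker r).1 (h₁ hr)
  refine ⟨P.comap W.subtype, hP.comap _, fun w hw => ?_, hPp⟩
  have hwp : (⟨w, mem_pullback_of_mem_maximalIdeal hker (hPm hw)⟩ : pullback π) ∈ p₂ :=
    hle (hPp ▸ hw)
  rw [← hQ₂] at hwp
  exact hwp

theorem goingDownHom_codRestrict_map_iff [IsDomain D] (hsurj : Function.Surjective π)
    (hker : RingHom.ker π = maximalIdeal V) (hW : pullback π ≤ W)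
    (h : ∀ d, algebraMap D (FractionRing D) d ∈ W.map π) :
    GoingDownHom ((algebraMap D (FractionRing D)).codRestrict (W.map π) h) ↔
      GoingDownHom (Subring.inclusion hW) := by
  have hcomm : (mapRestrict π W).comp (Subring.inclusion hW) =
      ((algebraMap D (FractionRing D)).codRestrict (W.map π) h).comp (proj π) :=
    RingHom.ext fun r => Subtype.ext (algebraMap_proj π r).symm
  have hker' : RingHom.ker (mapRestrict π W) ≤
      (RingHom.ker (proj π)).map (Subring.inclusion hW) := by
    intro w hw
    have hwm : (w : V) ∈ maximalIdeal V :=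
      hker ▸ RingHom.mem_ker.2 (congrArg Subtype.val (RingHom.mem_ker.1 hw))
    exact Ideal.mem_map_of_mem _
      ((mem_ker_proj hker ⟨w, mem_pullback_of_mem_maximalIdeal hker hwm⟩).2 hwm)
  refine ⟨fun hg p₁ p₂ _ _ hle Q₂ _ hQ₂ => ?_,
    GoingDownHom.of_comm_sq (proj_surjective hsurj) (mapRestrict_surjective π W) hcomm hker'⟩
  by_cases hp₁ : RingHom.ker (proj π) ≤ p₁
  · exact hg.exists_of_comm_sq (proj_surjective hsurj) (mapRestrict_surjective π W) hcomm hker'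
      hle hp₁ hQ₂
  · exact exists_prime_le_of_le_ker_proj hsurj hker hW (le_ker_proj_of_not_le hker hp₁) hle hQ₂

theorem exists_injective_extension [IsDomain D] [IsDomain V] (hsurj : Function.Surjective π)
    (hker : RingHom.ker π = maximalIdeal V) :
    ∃ ι : V →+* FractionRing (pullback π), Function.Injective ι ∧
      ∀ r : pullback π, ι r = algebraMap _ _ r := by
  have := isLocalization_ker_proj hsurj hker
  have hunits : ∀ s : (RingHom.ker (proj π)).primeCompl,
      IsUnit (algebraMap (pullback π) (FractionRing (pullback π)) s) := fun s =>
    isUnit_iff_ne_zero.2 <| (map_ne_zero_iff _ (IsFractionRing.injective _ _)).2 fun h =>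
      s.2 (h ▸ Ideal.zero_mem _)
  refine ⟨IsLocalization.lift (S := V) hunits,
    (IsLocalization.lift_injective_iff hunits).2 fun x y => ?_, IsLocalization.lift_eq hunits⟩
  exact Subtype.val_injective.eq_iff.trans (IsFractionRing.injective _ _).eq_iff.symm

theorem range_subset_localizationIn [IsDomain D] (hsurj : Function.Surjective π)
    (hker : RingHom.ker π = maximalIdeal V) (hιR : ∀ r : pullback π, ι r = algebraMap _ _ r)
    {P : Ideal (pullback π)} (hP : P ≤ RingHom.ker (proj π)) :
    Set.range ι ⊆ P.localizationIn (FractionRing (pullback π)) := by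
  rintro _ ⟨v, rfl⟩
  obtain ⟨r, s, hs, hv⟩ := exists_mul_eq hsurj hker v
  exact ⟨r, s, fun hsP => (notMem_ker_proj hker s).2 hs (hP hsP),
    by rw [← hιR, ← hιR, ← map_mul, hv]⟩

theorem localizationIn_subset_range (hker : RingHom.ker π = maximalIdeal V)
    (hιR : ∀ r : pullback π, ι r = algebraMap _ _ r) {P : Ideal (pullback π)}
    (hP : RingHom.ker (proj π) ≤ P) :
    P.localizationIn (FractionRing (pullback π)) ⊆ Set.range ι := by
  rintro x ⟨r, s, hsP, hx⟩
  obtain ⟨u, hu⟩ := ((notMem_ker_proj hker s).1 fun hs => hsP (hP hs)).exists_right_inv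
  have hu' : ι s * ι u = 1 := by rw [← map_mul, hu, map_one]
  rw [← hιR, ← hιR] at hx
  exact ⟨r * u, by rw [map_mul]; linear_combination (-ι u) * hx + x * hu'⟩

theorem coe_map_eq_localizationIn_iff (hsurj : Function.Surjective π)
    (hker : RingHom.ker π = maximalIdeal V) (hι : Function.Injective ι)
    (hιR : ∀ r : pullback π, ι r = algebraMap _ _ r) (hW : pullback π ≤ W)
    {P : Ideal (pullback π)} (hP : RingHom.ker (proj π) ≤ P) :
    (W.map ι : Set (FractionRing (pullback π))) = P.localizationIn (FractionRing (pullback π)) ↔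
      (W.map π : Set (FractionRing D)) = (P.map (proj π)).localizationIn (FractionRing D) := by
  rw [Subring.coe_map, Subring.coe_map,
    Set.image_eq_iff_eq_preimage (Set.preimage_image_eq _ hι)
      (localizationIn_subset_range hker hιR hP),
    Set.image_eq_iff_eq_preimage
      (by rw [← Subring.coe_map, ← Subring.coe_comap, comap_map_of_pullback_le hker hW])
      (by rw [hsurj.range_eq]; exact Set.subset_univ _),
    preimage_localizationIn hsurj hι hιR hP]

theorem perinormalDomain_of_perinormalDomain_pullback [IsDomain D] [IsDomain V]
    (hsurj : Function.Surjective π) (hker : RingHom.ker π = maximalIdeal V)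
    (h : PerinormalDomain (pullback π)) : PerinormalDomain D := by
  obtain ⟨ι, hι, hιR⟩ := exists_injective_extension hsurj hker
  intro T hT hTloc hGD
  obtain ⟨W, hW, rfl⟩ : ∃ W : Subring V, pullback π ≤ W ∧ W.map π = T :=
    ⟨T.comap π, fun _ hr => hT hr, Subring.map_comap_eq_self_of_surjective hsurj T⟩
  obtain ⟨P, hP, hPW⟩ := h (W.map ι) (by rintro _ ⟨r, rfl⟩; exact ⟨r, hW r.2, hιR r⟩)
    ((Subring.isLocalRing_map_iff hι W).2 ((isLocalRing_map_iff hker hW).1 hTloc))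
    ((goingDownHom_codRestrict_map_of_injective_iff hι hιR hW _).2
      ((goingDownHom_codRestrict_map_iff hsurj hker hW _).1 hGD))
  by_cases hkerP : RingHom.ker (proj π) ≤ P
  · exact ⟨P.map (proj π), Ideal.map_isPrime_of_surjective (proj_surjective hsurj) hkerP,
      (coe_map_eq_localizationIn_iff hsurj hker hι hιR hW hkerP).1 hPW⟩
  -- Now `P ⊆ m`, so `R_P`, the image of `W`, contains all of `V`.
  have hWV : ∀ v, v ∈ W := fun v => hι.mem_set_image.1 <| by
    rw [← Subring.coe_map, hPW]
    exact range_subset_localizationIn hsurj hker hιR (le_ker_proj_of_not_le hker hkerP) ⟨v, rfl⟩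
  refine ⟨⊥, Ideal.isPrime_bot, ?_⟩
  change _ = (⊥ : Ideal D).localizationIn _
  rw [Ideal.localizationIn_bot, Set.eq_univ_iff_forall]
  intro x
  obtain ⟨v, rfl⟩ := hsurj x
  exact ⟨v, hWV v, rfl⟩

end LocalRing

section Valuation

variable {D V : Type*} [CommRing D] [CommRing V] [IsDomain V] [ValuationRing V]
  {π : V →+* FractionRing D} {ι : V →+* FractionRing (pullback π)}

theorem exists_eq_or_mul_eq_one (hιR : ∀ r : pullback π, ι r = algebraMap _ _ r)
    (x : FractionRing (pullback π)) : x ∈ Set.range ι ∨ ∃ v, x * ι v = 1 := by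
  rcases eq_or_ne x 0 with rfl | hx0
  · exact Or.inl ⟨0, map_zero ι⟩
  obtain ⟨⟨a, b⟩, hx⟩ := IsLocalization.surj (nonZeroDivisors (pullback π)) x
  have hx' : x * ι (b : pullback π) = ι a := by simpa only [hιR] using hx
  have hb : ι (b : pullback π) ≠ 0 := by
    rw [hιR]
    exact (map_ne_zero_iff _ (IsFractionRing.injective _ _)).2 (nonZeroDivisors.coe_ne_zero b)
  have ha : ι a ≠ 0 := hx' ▸ mul_ne_zero hx0 hb
  obtain ⟨c, hc | hc⟩ := ValuationRing.cond ((b : pullback π) : V) (a : V)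
  · have hc' := congrArg ι hc
    rw [map_mul] at hc'
    exact Or.inl ⟨c, mul_right_cancel₀ hb (by linear_combination hc' - hx')⟩
  · have hc' := congrArg ι hc
    rw [map_mul] at hc'
    exact Or.inr ⟨c, mul_right_cancel₀ ha (by linear_combination x * hc' + hx')⟩

/-- An element `t ∈ T` outside `V` has inverse `w ∈ m`, and then `V = (V w) t ⊆ R t ⊆ T`. -/
theorem range_le_of_not_le (hker : RingHom.ker π = maximalIdeal V)
    (hιR : ∀ r : pullback π, ι r = algebraMap _ _ r) {T : Subring (FractionRing (pullback π))}
    (hT : (algebraMap (pullback π) _).range ≤ T) (h : ¬ T ≤ ι.range) : ι.range ≤ T := by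
  obtain ⟨t, htT, htι⟩ := Set.not_subset.1 h
  obtain ⟨w, hw⟩ := (exists_eq_or_mul_eq_one hιR t).resolve_left htι
  have hwm : w ∈ maximalIdeal V := by
    by_contra hwm
    obtain ⟨u, hu⟩ := (notMem_maximalIdeal.1 hwm).exists_right_inv
    have hu' : ι w * ι u = 1 := by rw [← map_mul, hu, map_one]
    exact htι ⟨u, by linear_combination (-ι u) * hw + t * hu'⟩
  rintro _ ⟨v, rfl⟩
  have hvw : ι (v * w) ∈ T :=
    (hιR ⟨_, mem_pullback_of_mem_maximalIdeal hker (Ideal.mul_mem_left _ v hwm)⟩).symm ▸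
      hT ⟨_, rfl⟩
  have hv : ι v = ι (v * w) * t := by
    rw [map_mul]
    linear_combination (-ι v) * hw
  exact hv ▸ T.mul_mem hvw htT

theorem exists_eq_localizationIn_of_range_le [IsDomain D] (hsurj : Function.Surjective π)
    (hker : RingHom.ker π = maximalIdeal V) (hιR : ∀ r : pullback π, ι r = algebraMap _ _ r)
    (T : Subring (FractionRing (pullback π))) [IsLocalRing T] (hT : ι.range ≤ T) :
    ∃ P : Ideal (pullback π), P.IsPrime ∧
      (T : Set (FractionRing (pullback π))) = P.localizationIn (FractionRing (pullback π)) := by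
  have hιT : ∀ v, ι v ∈ T := fun v => hT ⟨v, rfl⟩
  have hRT : ∀ r, algebraMap (pullback π) _ r ∈ T := fun r => hιR r ▸ hιT r
  set P := (maximalIdeal T).comap ((algebraMap (pullback π) _).codRestrict T hRT)
  have hunit : ∀ r, ∀ y ∈ T, algebraMap (pullback π) _ r * y = 1 → r ∉ P :=
    fun r y hy hry hr =>
      (mem_maximalIdeal _).1 hr (IsUnit.of_mul_eq_one ⟨y, hy⟩ (Subtype.ext hry))
  have hPker : P ≤ RingHom.ker (proj π) := fun r hr => by
    by_contra hr'
    obtain ⟨u, hu⟩ := ((notMem_ker_proj hker r).1 hr').exists_right_inv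
    exact hunit r (ι u) (hιT u) (by rw [← hιR, ← map_mul, hu, map_one]) hr
  refine ⟨P, Ideal.IsPrime.comap _, Set.ext fun x => ⟨fun hx => ?_, ?_⟩⟩
  · rcases exists_eq_or_mul_eq_one hιR x with hxι | ⟨v, hv⟩
    · exact range_subset_localizationIn hsurj hker hιR hPker hxι
    obtain ⟨r, s, hs, hvs⟩ := exists_mul_eq hsurj hker v
    obtain ⟨u, hu⟩ := hs.exists_right_inv
    have hu' : ι s * ι u = 1 := by rw [← map_mul, hu, map_one]
    have hxr : x * ι r = ι s := by
      rw [← hvs, map_mul]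
      linear_combination ι s * hv
    refine ⟨s, r, hunit r (x * ι u) (T.mul_mem hx (hιT u)) ?_, by rw [← hιR, ← hιR]; exact hxr⟩
    rw [← hιR]
    linear_combination ι u * hxr + hu'
  · rintro ⟨r, s, hs, hx⟩
    obtain ⟨t, ht⟩ := (notMem_maximalIdeal.1 hs).exists_right_inv
    have ht' : algebraMap (pullback π) _ s * (t : FractionRing (pullback π)) = 1 :=
      congrArg Subtype.val ht
    have hxt : x = algebraMap (pullback π) _ r * t := by
      linear_combination (t : FractionRing (pullback π)) * hx - x * ht'
    exact hxt ▸ T.mul_mem (hRT r) t.2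

theorem perinormalDomain_pullback [IsDomain D] (hsurj : Function.Surjective π)
    (hker : RingHom.ker π = maximalIdeal V) (h : PerinormalDomain D) :
    PerinormalDomain (pullback π) := by
  obtain ⟨ι, hι, hιR⟩ := exists_injective_extension hsurj hker
  intro T hT hTloc hGD
  by_cases hTι : T ≤ ι.range
  swap
  · exact exists_eq_localizationIn_of_range_le hsurj hker hιR T
      (range_le_of_not_le hker hιR hT hTι)
  obtain ⟨W, rfl⟩ : ∃ W : Subring V, W.map ι = T := ⟨T.comap ι, Subring.map_comap_eq_self hTι⟩
  have hW : pullback π ≤ W := fun r hr => hι.mem_set_image.1 <| by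
    rw [← Subring.coe_map, SetLike.mem_coe, hιR ⟨r, hr⟩]
    exact hT ⟨_, rfl⟩
  have hDW : ∀ d, algebraMap D (FractionRing D) d ∈ W.map π := fun d => by
    obtain ⟨v, hv⟩ := hsurj (algebraMap D _ d)
    exact ⟨v, hW ⟨d, hv.symm⟩, hv⟩
  obtain ⟨p, hp, hpW⟩ := h (W.map π) (by rintro _ ⟨d, rfl⟩; exact hDW d)
    ((isLocalRing_map_iff hker hW).2 ((Subring.isLocalRing_map_iff hι W).1 hTloc))
    ((goingDownHom_codRestrict_map_iff hsurj hker hW _).2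
      ((goingDownHom_codRestrict_map_of_injective_iff hι hιR hW _).1 hGD))
  refine ⟨p.comap (proj π), Ideal.IsPrime.comap _,
    (coe_map_eq_localizationIn_iff hsurj hker hι hιR hW (Ideal.comap_mono bot_le)).2 ?_⟩
  rwa [Ideal.map_comap_of_surjective _ (proj_surjective hsurj)]

end Valuation

end DPlusM

/-- **the classical `D + M` construction, and more.**  Let `D` be a domain with
fraction field `k`, and `V` a valuation domain with a surjection `π : V → k` whose kernel is
the maximal ideal of `V` (so `V` has residue field `k`).  If `R` is the pullback
`{v ∈ V : π v ∈ D}` of `D → k ← V`, then `R` is perinormal iff `D` is perinormal. -/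
theorem perinormal_pullback_valuation_iff {D V : Type*} [CommRing D] [IsDomain D]
    [CommRing V] [IsDomain V] [ValuationRing V]
    (π : V →+* FractionRing D) (hsurj : Function.Surjective π)
    (hker : RingHom.ker π = IsLocalRing.maximalIdeal V)
    (R : Subring V) (hR : R = ((algebraMap D (FractionRing D)).range).comap π) :
    PerinormalDomain R ↔ PerinormalDomain D := by
  subst hR
  exact ⟨DPlusM.perinormalDomain_of_perinormalDomain_pullback hsurj hker,
    DPlusM.perinormalDomain_pullback hsurj hker⟩
end

section
/- Let S be a generalized Krull domain and J an ideal of S having only finitely many minimal primes over it, all of height at least two. Let A be a subring of S/J over which S/J is integral, and let R be the pullback of the diagram A → S/J ← S (i.e., R = {s ∈ S : s + J ∈ A}). Then the contraction map Spec S → Spec R induces a bijection from the set of height-one primes of S onto the set of height-one primes of R, under which the corresponding localizations coincide (for a height-one prime Q of S with P = Q ∩ R, the canonical map R_P → S_Q is an isomorphism). In particular, R_P is a valuation domain for every height-one prime P of R. -/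
/-! A height-one prime `Q` of `S` cannot contain `J`, whose minimal primes have height at least
two. For `t ∈ J \ Q` we have `t • S ⊆ J ⊆ R`, so every fraction `s / u` of `S_Q` equals
`(t s) / (t u)` with numerator and denominator in `R`: the map `R_{Q ∩ R} → S_Q` is an
isomorphism, `Q ∩ R` has the height of `Q`, and `Q` is recovered from `Q ∩ R` as
`{s | t s ∈ Q ∩ R}`.

Conversely `S` is integral over `R`: a monic equation of `s + J` over `A` lifts to a monic `g`
over `R` with `g(s) ∈ J ⊆ R`. Since contraction along an integral extension is strictly monotone
on primes, a prime `P` of `R` containing `J ∩ R` lies under a prime of `S` containing `J`, so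
`2 ≤ ht P`. Hence every height-one prime of `R` misses `J` and lies under a height-one prime of
`S`. -/

open Ideal Polynomial

theorem Ideal.height_le_height_comap_of_isIntegral {R A : Type*} [CommRing R] [CommRing A]
    [Algebra R A] [Algebra.IsIntegral R A] (Q : Ideal A) [Q.IsPrime] :
    Q.height ≤ (Q.comap (algebraMap R A)).height := by
  have := Order.height_le_height_apply_of_strictMono (PrimeSpectrum.comap (algebraMap R A))
    (fun _ _ h => IsIntegral.comap_lt_comap h) ⟨Q, ‹_›⟩
  rwa [← PrimeSpectrum.height_eq_orderHeight, ← PrimeSpectrum.height_eq_orderHeight] at this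

theorem Ideal.height_le_height_of_comap_le {R A : Type*} [CommRing R] [CommRing A]
    [Algebra R A] [Algebra.IsIntegral R A] {I : Ideal A} {P : Ideal R} [P.IsPrime]
    (h : I.comap (algebraMap R A) ≤ P) : I.height ≤ P.height := by
  obtain ⟨Q, hIQ, hQ, rfl⟩ := exists_ideal_over_prime_of_isIntegral P I h
  exact (height_mono hIQ).trans (height_le_height_comap_of_isIntegral Q)

theorem Ideal.height_comap_eq_of_bijective_localRingHom {A B : Type*} [CommRing A] [CommRing B]
    (f : A →+* B) (Q : Ideal B) [Q.IsPrime]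
    (hf : Function.Bijective (Localization.localRingHom (Q.comap f) Q f rfl)) :
    (Q.comap f).height = Q.height := by
  have := ringKrullDim_eq_of_ringEquiv (RingEquiv.ofBijective _ hf)
  rw [IsLocalization.AtPrime.ringKrullDim_eq_height (Q.comap f),
    IsLocalization.AtPrime.ringKrullDim_eq_height Q] at this
  exact_mod_cast this

theorem Subring.isIntegral_comap_quotientMk {S : Type*} [CommRing S] [Nontrivial S] (J : Ideal S)
    (A : Subring (S ⧸ J)) [Algebra.IsIntegral A (S ⧸ J)] :
    Algebra.IsIntegral (A.comap (Ideal.Quotient.mk J)) S := by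
  set R := A.comap (Ideal.Quotient.mk J)
  let π : R →+* A := (Ideal.Quotient.mk J).restrict R A fun _ h => h
  have hπ : Function.Surjective π := fun a => by
    obtain ⟨s, hs⟩ := Ideal.Quotient.mk_surjective (a : S ⧸ J)
    exact ⟨⟨s, show _ ∈ A from hs ▸ a.2⟩, Subtype.ext hs⟩
  refine ⟨fun s => ?_⟩
  obtain ⟨f, hf, hfs⟩ := Algebra.IsIntegral.isIntegral (R := A) (Ideal.Quotient.mk J s)
  obtain ⟨g, rfl, -, hg⟩ := lifts_and_natDegree_eq_and_monic
    (lifts_iff_coeff_lifts _ |>.mpr fun n => hπ _) hf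
  have hgs : aeval s g ∈ J := by
    rw [← Ideal.Quotient.eq_zero_iff_mem, ← hfs, aeval_def, hom_eval₂, eval₂_map]
    rfl
  refine IsIntegral.of_aeval_monic (monic_X.mul hg) ?_ ?_
  · rw [natDegree_X_mul hg.ne_zero]
    exact Nat.succ_ne_zero _
  · rw [map_mul, aeval_X]
    have hR : s * aeval s g ∈ R := by
      simp [R, Ideal.Quotient.eq_zero_iff_mem.mpr (J.mul_mem_left s hgs)]
    exact isIntegral_algebraMap (x := (⟨_, hR⟩ : R))

section Conductor

variable {S : Type*} [CommRing S] {R : Subring S} {t : S}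

theorem Ideal.le_of_comap_le_of_mul_mem (ht : ∀ s, t * s ∈ R) {Q₁ Q₂ : Ideal S}
    [hQ₂ : Q₂.IsPrime] (htQ : t ∉ Q₂) (h : Q₁.comap R.subtype ≤ Q₂.comap R.subtype) :
    Q₁ ≤ Q₂ := fun s hs =>
  (hQ₂.mem_or_mem (h (x := ⟨t * s, ht s⟩) (Q₁.mul_mem_left t hs))).resolve_left htQ

theorem bijective_localRingHom_of_mul_mem (ht : ∀ s, t * s ∈ R) (Q : Ideal S) [hQ : Q.IsPrime]
    (htQ : t ∉ Q) :
    Function.Bijective (Localization.localRingHom (Q.comap R.subtype) Q R.subtype rfl) := by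
  have htu : ∀ u ∉ Q, (⟨t * u, ht u⟩ : R) ∈ (Q.comap R.subtype).primeCompl :=
    fun u hu h => (hQ.mem_or_mem h).elim htQ hu
  constructor
  · rw [injective_iff_map_eq_zero]
    intro x hx
    obtain ⟨⟨r, w⟩, rfl⟩ := IsLocalization.mk'_surjective (Q.comap R.subtype).primeCompl x
    rw [Localization.localRingHom_mk', IsLocalization.mk'_eq_zero_iff] at hx
    obtain ⟨⟨u, hu⟩, hur⟩ := hx
    rw [IsLocalization.mk'_eq_zero_iff]
    refine ⟨⟨_, htu u hu⟩, Subtype.ext ?_⟩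
    show t * u * r = 0
    rw [mul_assoc, show u * (r : S) = 0 from hur, mul_zero]
  · intro y
    obtain ⟨⟨s, u, hu⟩, rfl⟩ := IsLocalization.mk'_surjective Q.primeCompl y
    refine ⟨IsLocalization.mk' _ (⟨t * s, ht s⟩ : R) ⟨_, htu u hu⟩, ?_⟩
    rw [Localization.localRingHom_mk']
    exact IsLocalization.mk'_eq_of_eq' (show s * (t * u) = t * s * u by ring)

end Conductor

section Pullback

variable {S : Type*} [CommRing S] {R : Subring S} {J : Ideal S}

theorem Ideal.exists_comap_eq_of_height_lt [Algebra.IsIntegral R S] {P : Ideal R} [P.IsPrime]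
    (hP : P.height < J.height) :
    ∃ Q : Ideal S, Q.IsPrime ∧ ¬ J ≤ Q ∧ Q.comap R.subtype = P := by
  have hJP : ¬ J.comap R.subtype ≤ P := fun h => (height_le_height_of_comap_le h).not_gt hP
  obtain ⟨Q, -, hQ, hQP⟩ := exists_ideal_over_prime_of_isIntegral P (⊥ : Ideal S) (by simp)
  exact ⟨Q, hQ, fun hJQ => hJP (hQP ▸ comap_mono hJQ), hQP⟩

variable (hJR : (J : Set S) ⊆ R)
include hJR

theorem bijective_localRingHom_of_not_le {Q : Ideal S} [Q.IsPrime] (hJQ : ¬ J ≤ Q) :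
    Function.Bijective (Localization.localRingHom (Q.comap R.subtype) Q R.subtype rfl) :=
  let ⟨_, htJ, htQ⟩ := SetLike.not_le_iff_exists.mp hJQ
  bijective_localRingHom_of_mul_mem (fun s => hJR (J.mul_mem_right s htJ)) Q htQ

theorem Ideal.height_comap_eq_of_not_le {Q : Ideal S} [Q.IsPrime] (hJQ : ¬ J ≤ Q) :
    (Q.comap R.subtype).height = Q.height :=
  height_comap_eq_of_bijective_localRingHom _ Q (bijective_localRingHom_of_not_le hJR hJQ)

theorem Ideal.eq_of_comap_eq_of_not_le {Q₁ Q₂ : Ideal S} [Q₁.IsPrime] [Q₂.IsPrime]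
    (h₁ : ¬ J ≤ Q₁) (h₂ : ¬ J ≤ Q₂) (h : Q₁.comap R.subtype = Q₂.comap R.subtype) : Q₁ = Q₂ := by
  obtain ⟨t₁, ht₁J, ht₁⟩ := SetLike.not_le_iff_exists.mp h₁
  obtain ⟨t₂, ht₂J, ht₂⟩ := SetLike.not_le_iff_exists.mp h₂
  exact le_antisymm (le_of_comap_le_of_mul_mem (fun s => hJR (J.mul_mem_right s ht₂J)) ht₂ h.le)
    (le_of_comap_le_of_mul_mem (fun s => hJR (J.mul_mem_right s ht₁J)) ht₁ h.ge)

end Pullback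

theorem heightOne_bijection_of_pullback_general {S : Type*} [CommRing S] [IsDomain S]
    (hS : IsGenKrull S) (J : Ideal S)
    (hht : ∀ q, ∀ hq : q ∈ J.minimalPrimes,
      2 ≤ Order.height (⟨q, hq.1.1⟩ : PrimeSpectrum S))
    (A : Subring (S ⧸ J)) (hint : Algebra.IsIntegral A (S ⧸ J))
    (R : Subring S) (hR : R = A.comap (Ideal.Quotient.mk J)) :
    (∀ Q : Ideal S, HeightOne Q → HeightOne (Q.comap R.subtype)) ∧
    (∀ Q₁ Q₂ : Ideal S, HeightOne Q₁ → HeightOne Q₂ →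
      Q₁.comap R.subtype = Q₂.comap R.subtype → Q₁ = Q₂) ∧
    (∀ P : Ideal R, HeightOne P →
      ∃ Q : Ideal S, HeightOne Q ∧ Q.comap R.subtype = P) ∧
    (∀ (Q : Ideal S) (hQ : Q.IsPrime),
      Order.height (⟨Q, hQ⟩ : PrimeSpectrum S) = 1 →
      haveI := hQ
      Function.Bijective (Localization.localRingHom (Q.comap R.subtype) Q R.subtype rfl)) ∧
    (∀ (P : Ideal R) (hP : P.IsPrime),
      Order.height (⟨P, hP⟩ : PrimeSpectrum R) = 1 →
      haveI := hP
      ValuationRing (Localization.AtPrime P)) := by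
  subst hR
  have hJR : (J : Set S) ⊆ A.comap (Ideal.Quotient.mk J) := fun x hx => by
    simp [Ideal.Quotient.eq_zero_iff_mem.mpr hx]
  have hJ : 1 < J.height := by
    rw [height_eq_inf_minimalPrimes]
    refine lt_of_lt_of_le (b := 2) (by norm_num) (le_iInf₂ fun q hq => ?_)
    rw [show q.height = _ from PrimeSpectrum.height_eq_orderHeight ⟨q, hq.1.1⟩]
    exact hht q hq
  have := Subring.isIntegral_comap_quotientMk J A
  have hS1 : ∀ Q : Ideal S, Q.height = 1 → ¬ J ≤ Q := fun Q h hJQ =>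
    (height_mono hJQ).not_gt (h.trans_lt hJ)
  simp only [HeightOne, ← PrimeSpectrum.height_eq_orderHeight]
  refine ⟨?_, ?_, ?_, ?_, ?_⟩
  · rintro Q ⟨hQ, h⟩
    exact ⟨inferInstance, (height_comap_eq_of_not_le hJR (hS1 Q h)).trans h⟩
  · rintro Q₁ Q₂ ⟨_, h₁⟩ ⟨_, h₂⟩
    exact eq_of_comap_eq_of_not_le hJR (hS1 _ h₁) (hS1 _ h₂)
  · rintro P ⟨_, h⟩
    obtain ⟨Q, hQ, hJQ, rfl⟩ := exists_comap_eq_of_height_lt (h.trans_lt hJ)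
    exact ⟨Q, ⟨hQ, (height_comap_eq_of_not_le hJR hJQ).symm.trans h⟩, rfl⟩
  · intro Q _ h
    exact bijective_localRingHom_of_not_le hJR (hS1 Q h)
  · intro P _ h
    obtain ⟨Q, hQ, hJQ, rfl⟩ := exists_comap_eq_of_height_lt (h.trans_lt hJ)
    have hQ1 : Q.height = 1 := (height_comap_eq_of_not_le hJR hJQ).symm.trans h
    have := hS.2.2 Q hQ ((PrimeSpectrum.height_eq_orderHeight ⟨Q, hQ⟩).symm.trans hQ1)
    let e := RingEquiv.ofBijective _ (bijective_localRingHom_of_not_le hJR hJQ)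
    exact Function.Surjective.valuationRing e.symm.toRingHom e.symm.surjective

/-- Let `S` be a generalized Krull domain and `J` an ideal with finitely
many minimal primes, all of height at least two.  Let `A` be a subring of `S/J` over which
`S/J` is integral, and `R` the pullback of `A → S/J ← S`.  Then contraction induces a
bijection between the height-one primes of `S` and those of `R`, under which the corresponding
localizations coincide (the canonical map `R_P → S_Q` is an isomorphism); in particular
`R_P` is a valuation ring for every height-one prime `P` of `R`. -/
theorem heightOne_bijection_of_pullback {S : Type*} [CommRing S] [IsDomain S]
    (hS : IsGenKrull S) (J : Ideal S) (hfin : J.minimalPrimes.Finite)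
    (hht : ∀ q, ∀ hq : q ∈ J.minimalPrimes,
      2 ≤ Order.height (⟨q, hq.1.1⟩ : PrimeSpectrum S))
    (A : Subring (S ⧸ J)) (hint : Algebra.IsIntegral A (S ⧸ J))
    (R : Subring S) (hR : R = A.comap (Ideal.Quotient.mk J)) :
    (∀ Q : Ideal S, HeightOne Q → HeightOne (Q.comap R.subtype)) ∧
    (∀ Q₁ Q₂ : Ideal S, HeightOne Q₁ → HeightOne Q₂ →
      Q₁.comap R.subtype = Q₂.comap R.subtype → Q₁ = Q₂) ∧
    (∀ P : Ideal R, HeightOne P →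
      ∃ Q : Ideal S, HeightOne Q ∧ Q.comap R.subtype = P) ∧
    (∀ (Q : Ideal S) (hQ : Q.IsPrime),
      Order.height (⟨Q, hQ⟩ : PrimeSpectrum S) = 1 →
      haveI := hQ
      Function.Bijective (Localization.localRingHom (Q.comap R.subtype) Q R.subtype rfl)) ∧
    (∀ (P : Ideal R) (hP : P.IsPrime),
      Order.height (⟨P, hP⟩ : PrimeSpectrum R) = 1 →
      haveI := hP
      ValuationRing (Localization.AtPrime P)) :=
  heightOne_bijection_of_pullback_general hS J hht A hint R hR
end

section
/- Let S be a generalized Krull domain and J an ideal of S having only finitely many minimal primes over it, all of height at least two. Let A be a subring of S/J over which S/J is integral, and let R be the pullback of the diagram A → S/J ← S (i.e., R = {s ∈ S : s + J ∈ A}). If the extension A ⊆ S/J is apparently fragile, then the only ring T with R ⊆ T ⊆ S such that the inclusion R ⊆ T satisfies going-down is T = R itself. -/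
/-!
If `T ≠ R`, the image of `T` in `S/J` strictly contains `A`, so apparent fragility provides
primes `P ≠ Q` of `T` with the same contraction to `R`, and both lie under primes of `S` since `S`
is integral over `T`. Going-down then forces `P ⊆ Q`, and symmetrically `Q ⊆ P`. Indeed, given
`0 ≠ u ∈ P`, the principal ideal theorem for generalized Krull domains gives a height-one prime
`q ∋ u` of `S` lying below a prime over `P`; as the minimal primes of `J` have height at least two,
some `t ∈ J` avoids `q`. Going-down over `q ∩ R ⊆ Q ∩ R` yields a prime `Q₁ ⊆ Q` of `T` with
`Q₁ ∩ R = q ∩ R`, which contains `t u ∈ J ∩ q ⊆ R` but not `t`, hence contains `u`.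
-/

section HeightOne

variable {S : Type*} [CommRing S]

theorem HeightOne.not_le {q J : Ideal S} (hq : HeightOne q)
    (hht : ∀ q, ∀ hq : q ∈ J.minimalPrimes, 2 ≤ Order.height (⟨q, hq.1.1⟩ : PrimeSpectrum S)) :
    ¬ J ≤ q := by
  obtain ⟨hq, h1⟩ := hq
  intro hJq
  obtain ⟨q', hq', hq'q⟩ := Ideal.exists_minimalPrimes_le hJq
  have h2 := (hht q' hq').trans
    (Order.height_mono (show (⟨q', hq'.1.1⟩ : PrimeSpectrum S) ≤ ⟨q, hq⟩ from hq'q))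
  rw [h1] at h2
  norm_num at h2

variable [IsDomain S]

theorem HeightOne.eq_of_le {p q : Ideal S} (hp : HeightOne p) [q.IsPrime] (hq : q ≠ ⊥)
    (hqp : q ≤ p) : q = p := by
  obtain ⟨hp, h1⟩ := hp
  have hp1 : p.height = 1 := (PrimeSpectrum.height_eq_orderHeight ⟨p, hp⟩).trans h1
  have : p.FiniteHeight := p.finiteHeight_iff.mpr (Or.inr (by simp [hp1]))
  refine hqp.eq_of_not_lt fun hlt => hq ?_
  have hlt1 := Ideal.height_strict_mono_of_isPrime_of_isPrime hlt
  rw [hp1] at hlt1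
  exact Ideal.height_eq_zero_iff_eq_bot.mp (Order.lt_one_iff.mp hlt1)

theorem HeightOne.exists_mul_pow_mem_span_singleton {p : Ideal S} (hp : HeightOne p) {u x : S}
    (hu : u ≠ 0) (hxp : x ∈ p) :
    ∃ k : ℕ, ∃ s ∉ p, s * x ^ k ∈ Ideal.span {u} := by
  have := hp.1
  by_contra! h
  obtain ⟨q, hq, hle, hdisj⟩ := Ideal.exists_le_prime_disjoint (Ideal.span {u})
    (p.primeCompl ⊔ Submonoid.powers x) (by
      refine Set.disjoint_right.mpr fun y hy => ?_
      obtain ⟨s, hs, _, ⟨k, rfl⟩, rfl⟩ := Submonoid.mem_sup.mp hy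
      exact h k s hs)
  have hqp : q ≤ p := fun y hy => by
    by_contra hyp
    exact Set.disjoint_left.mp hdisj hy (Submonoid.mem_sup_left (show y ∈ p.primeCompl from hyp))
  have hq0 : q ≠ ⊥ := fun h0 =>
    hu (by simpa [h0] using hle (Ideal.mem_span_singleton_self u))
  rw [← hp.eq_of_le hq0 hqp] at hxp
  exact Set.disjoint_left.mp hdisj hxp (Submonoid.mem_sup_right (Submonoid.mem_powers x))

end HeightOne

namespace IsGenKrull

variable {S : Type*} [CommRing S] [IsDomain S]

theorem finite_heightOne_mem (hS : IsGenKrull S) {u : S} (hu : u ≠ 0) :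
    {p : Ideal S | HeightOne p ∧ u ∈ p}.Finite :=
  (hS.2.1 u hu).subset fun _ ⟨⟨hp, h1⟩, hup⟩ => ⟨hp, h1, hup⟩

theorem mem_span_singleton_of_forall_heightOne (hS : IsGenKrull S) {u y : S} (hu : u ≠ 0)
    (h : ∀ p, HeightOne p → ∃ s ∉ p, s * y ∈ Ideal.span {u}) : y ∈ Ideal.span {u} := by
  have hinj := IsFractionRing.injective S (FractionRing S)
  have hu' : algebraMap S (FractionRing S) u ≠ 0 := (map_ne_zero_iff _ hinj).mpr hu
  obtain ⟨r, hr⟩ := hS.1 (algebraMap S _ y / algebraMap S _ u) fun p hp h1 => by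
    obtain ⟨s, hs, hsy⟩ := h p ⟨hp, h1⟩
    obtain ⟨a, ha⟩ := Ideal.mem_span_singleton'.mp hsy
    refine ⟨a, s, hs, ?_⟩
    rw [div_mul_eq_mul_div, div_eq_iff hu', ← map_mul, ← map_mul, mul_comm y, ← ha]
  refine Ideal.mem_span_singleton'.mpr ⟨r, hinj ?_⟩
  rw [map_mul, hr, div_mul_cancel₀ _ hu']

theorem exists_pow_mem_span_singleton (hS : IsGenKrull S) {u x : S} (hu : u ≠ 0)
    (hx : ∀ p, HeightOne p → u ∈ p → x ∈ p) : ∃ k : ℕ, x ^ k ∈ Ideal.span {u} := by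
  have hloc : ∀ p ∈ {p : Ideal S | HeightOne p ∧ u ∈ p},
      ∀ᶠ k in Filter.atTop, ∃ s ∉ p, s * x ^ k ∈ Ideal.span {u} := by
    rintro p ⟨hp, hup⟩
    obtain ⟨k₀, s, hs, hk₀⟩ := hp.exists_mul_pow_mem_span_singleton hu (hx p hp hup)
    filter_upwards [Filter.eventually_ge_atTop k₀] with k hk
    refine ⟨s, hs, ?_⟩
    rw [← Nat.sub_add_cancel hk, pow_add, mul_left_comm]
    exact Ideal.mul_mem_left _ _ hk₀
  obtain ⟨k, hk⟩ := ((hS.finite_heightOne_mem hu).eventually_all.mpr hloc).exists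
  refine ⟨k, hS.mem_span_singleton_of_forall_heightOne hu fun p hp => ?_⟩
  by_cases hup : u ∈ p
  · exact hk p ⟨hp, hup⟩
  · exact ⟨u, hup, Ideal.mul_mem_right _ _ (Ideal.mem_span_singleton_self u)⟩

theorem heightOne_of_mem_minimalPrimes_span_singleton (hS : IsGenKrull S) {u : S} (hu : u ≠ 0)
    {q : Ideal S} (hq : q ∈ (Ideal.span {u}).minimalPrimes) : HeightOne q := by
  have hfin := hS.finite_heightOne_mem hu
  have hqp := hq.1.1
  have hinf : hfin.toFinset.inf id ≤ q := fun x hx => by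
    obtain ⟨k, hk⟩ := hS.exists_pow_mem_span_singleton hu fun p hp hup =>
      Finset.inf_le (f := id) (hfin.mem_toFinset.mpr ⟨hp, hup⟩) hx
    exact hqp.mem_of_pow_mem k (hq.1.2 hk)
  obtain ⟨p, hpF, hpq⟩ := hqp.inf_le'.mp hinf
  obtain ⟨hp, hup⟩ := hfin.mem_toFinset.mp hpF
  rwa [le_antisymm (hq.2 ⟨hp.1, Ideal.span_singleton_le_iff_mem _ |>.mpr hup⟩ hpq) hpq]

theorem exists_heightOne_le (hS : IsGenKrull S) {P : Ideal S} [P.IsPrime] {u : S} (hu : u ≠ 0)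
    (huP : u ∈ P) :
    ∃ q, HeightOne q ∧ u ∈ q ∧ q ≤ P := by
  obtain ⟨q, hq, hqP⟩ :=
    Ideal.exists_minimalPrimes_le ((Ideal.span_singleton_le_iff_mem _).mpr huP)
  exact ⟨q, hS.heightOne_of_mem_minimalPrimes_span_singleton hu hq,
    hq.1.2 (Ideal.mem_span_singleton_self u), hqP⟩

end IsGenKrull

section Subrings

variable {S : Type*} [CommRing S] {R T : Subring S} (hRT : R ≤ T)

theorem GoingDownHom.mem_of_mul_mem (hGD : GoingDownHom (Subring.inclusion hRT))
    {q : Ideal S} [q.IsPrime] {Q : Ideal T} [Q.IsPrime]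
    (hqQ : q.comap R.subtype ≤ Q.comap (Subring.inclusion hRT)) {u : T} (huq : (u : S) ∈ q)
    {t : S} (htR : t ∈ R) (htq : t ∉ q) (htuR : t * u ∈ R) : u ∈ Q := by
  obtain ⟨Q₁, hQ₁, hQ₁Q, hQ₁q⟩ := hGD _ _ (Ideal.IsPrime.comap _) (Ideal.IsPrime.comap _) hqQ Q
    ‹_› rfl
  have htQ₁ : (⟨t, hRT htR⟩ : T) ∉ Q₁ := fun h =>
    htq (show (⟨t, htR⟩ : R) ∈ q.comap R.subtype from hQ₁q ▸ h)
  have htuQ₁ : (⟨t, hRT htR⟩ : T) * u ∈ Q₁ :=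
    show (⟨t * u, htuR⟩ : R) ∈ Q₁.comap (Subring.inclusion hRT) from hQ₁q ▸ q.mul_mem_left t huq
  exact hQ₁Q ((hQ₁.mem_or_mem htuQ₁).resolve_left htQ₁)

variable [IsDomain S]

theorem IsGenKrull.comap_le_of_goingDown (hS : IsGenKrull S) {J : Ideal S}
    (hht : ∀ q, ∀ hq : q ∈ J.minimalPrimes, 2 ≤ Order.height (⟨q, hq.1.1⟩ : PrimeSpectrum S))
    (hJR : (J : Set S) ⊆ R) (hGD : GoingDownHom (Subring.inclusion hRT))
    {P : Ideal S} [P.IsPrime] {Q : Ideal T} [Q.IsPrime]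
    (hPQ : P.comap R.subtype ≤ Q.comap (Subring.inclusion hRT)) : P.comap T.subtype ≤ Q := by
  intro u huP
  obtain rfl | hu := eq_or_ne u 0
  · exact Q.zero_mem
  obtain ⟨q, hq, huq, hqP⟩ := hS.exists_heightOne_le (Subtype.coe_ne_coe.mpr hu) huP
  obtain ⟨t, htJ, htq⟩ := SetLike.not_le_iff_exists.mp (hq.not_le hht)
  have := hq.1
  exact hGD.mem_of_mul_mem hRT ((Ideal.comap_mono hqP).trans hPQ) huq (hJR htJ) htq
    (hJR (J.mul_mem_right _ htJ))

end Subrings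

section Pullback

variable {S : Type*} [CommRing S] {J : Ideal S} {A : Subring (S ⧸ J)}

theorem coe_subset_comap_mk : (J : Set S) ⊆ A.comap (Ideal.Quotient.mk J) := fun x hx =>
  show Ideal.Quotient.mk J x ∈ A from (Ideal.Quotient.eq_zero_iff_mem.mpr hx) ▸ A.zero_mem

theorem exists_ne_comap_eq_of_apparentlyFragile (hfrag : ApparentlyFragile A) {T : Subring S}
    (hRT : A.comap (Ideal.Quotient.mk J) ≤ T) (hTR : ¬ T ≤ A.comap (Ideal.Quotient.mk J)) :
    ∃ P Q : Ideal T, P.IsPrime ∧ Q.IsPrime ∧ P ≠ Q ∧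
      P.comap (Subring.inclusion hRT) = Q.comap (Subring.inclusion hRT) := by
  set φ := ((Ideal.Quotient.mk J).comp T.subtype).rangeRestrict
  have hAC : A ≤ ((Ideal.Quotient.mk J).comp T.subtype).range := fun a ha => by
    obtain ⟨s, rfl⟩ := Ideal.Quotient.mk_surjective a
    exact ⟨⟨s, hRT ha⟩, rfl⟩
  have hAne : A ≠ ((Ideal.Quotient.mk J).comp T.subtype).range := fun h => by
    obtain ⟨t, htT, htR⟩ := SetLike.not_le_iff_exists.mp hTR
    exact htR (show Ideal.Quotient.mk J t ∈ A from h ▸ ⟨⟨t, htT⟩, rfl⟩)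
  obtain ⟨p, -, P, Q, _, _, hPQ, hPp, hQp⟩ := hfrag _ hAC hAne
  have hcomp : φ.comp (Subring.inclusion hRT) = (Subring.inclusion hAC).comp
      ((Ideal.Quotient.mk J).restrict (A.comap (Ideal.Quotient.mk J)) A fun _ h => h) := rfl
  refine ⟨P.comap φ, Q.comap φ, Ideal.IsPrime.comap φ, Ideal.IsPrime.comap φ,
    fun h => hPQ (Ideal.comap_injective_of_surjective φ (RingHom.rangeRestrict_surjective _) h), ?_⟩
  rw [Ideal.comap_comap, Ideal.comap_comap, hcomp, ← Ideal.comap_comap, ← Ideal.comap_comap,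
    hPp, hQp]

theorem isIntegral_comap_mk (hint : Algebra.IsIntegral A (S ⧸ J)) :
    Algebra.IsIntegral (A.comap (Ideal.Quotient.mk J)) S := by
  set ρ := (Ideal.Quotient.mk J).restrict (A.comap (Ideal.Quotient.mk J)) A fun _ h => h
  have hρ : Function.Surjective ρ := fun ⟨a, ha⟩ => by
    obtain ⟨s, rfl⟩ := Ideal.Quotient.mk_surjective a
    exact ⟨⟨s, ha⟩, rfl⟩
  refine ⟨fun s => ?_⟩
  obtain ⟨f, hf, hfs⟩ := hint.isIntegral (Ideal.Quotient.mk J s)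
  obtain ⟨g, hgf, -, hg⟩ := Polynomial.lifts_and_natDegree_eq_and_monic
    (f := ρ) (p := f) ((Polynomial.lifts_iff_coeff_lifts f).mpr fun _ => hρ _) hf
  have hJ : ∀ y ∈ J, IsIntegral (A.comap (Ideal.Quotient.mk J)) y := fun y hy =>
    isIntegral_algebraMap (x := (⟨y, coe_subset_comap_mk hy⟩ : A.comap (Ideal.Quotient.mk J)))
  have hgs : Polynomial.aeval s g ∈ J := by
    rw [← Ideal.Quotient.eq_zero_iff_mem, Polynomial.aeval_def, Polynomial.hom_eval₂]
    rw [show (Ideal.Quotient.mk J).comp (algebraMap _ S) = (algebraMap A (S ⧸ J)).comp ρ from rfl,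
      ← Polynomial.eval₂_map, hgf]
    exact hfs
  by_cases h0 : g.natDegree = 0
  · rw [Polynomial.eq_one_of_monic_natDegree_zero hg h0, map_one] at hgs
    exact hJ s (by simpa using J.mul_mem_left s hgs)
  · exact IsIntegral.of_aeval_monic hg h0 (hJ _ hgs)

end Pullback

theorem no_goingDown_intermediate_of_apparentlyFragile_general {S : Type*} [CommRing S] [IsDomain S]
    (hS : IsGenKrull S) (J : Ideal S)
    (hht : ∀ q, ∀ hq : q ∈ J.minimalPrimes,
      2 ≤ Order.height (⟨q, hq.1.1⟩ : PrimeSpectrum S))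
    (A : Subring (S ⧸ J)) (hint : Algebra.IsIntegral A (S ⧸ J))
    (hfrag : ApparentlyFragile A)
    (R : Subring S) (hR : R = A.comap (Ideal.Quotient.mk J)) :
    ∀ (T : Subring S) (hRT : R ≤ T), GoingDownHom (Subring.inclusion hRT) → T = R := by
  intro T hRT hGD
  subst hR
  refine le_antisymm ?_ hRT
  by_contra hTR
  obtain ⟨P, Q, _, _, hPQ, hcomap⟩ := exists_ne_comap_eq_of_apparentlyFragile hfrag hRT hTR
  have : Algebra.IsIntegral T S := ⟨RingHom.IsIntegral.tower_top (Subring.inclusion hRT)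
    T.subtype (isIntegral_comap_mk hint).isIntegral⟩
  obtain ⟨P', -, _, rfl⟩ := Ideal.exists_ideal_over_prime_of_isIntegral P ⊥
    (Ideal.comap_bot_le_of_injective _ Subtype.val_injective)
  obtain ⟨Q', -, _, rfl⟩ := Ideal.exists_ideal_over_prime_of_isIntegral Q ⊥
    (Ideal.comap_bot_le_of_injective _ Subtype.val_injective)
  exact hPQ (le_antisymm (hS.comap_le_of_goingDown hRT hht coe_subset_comap_mk hGD hcomap.le)
    (hS.comap_le_of_goingDown hRT hht coe_subset_comap_mk hGD hcomap.ge))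

/-- Let `S` be a generalized Krull domain and `J` an ideal with finitely
many minimal primes, all of height at least two.  Let `A` be a subring of `S/J` over which
`S/J` is integral, and `R` the pullback of `A → S/J ← S`.  If `A ⊆ S/J` is apparently fragile,
then the only ring between `R` and `S` satisfying going-down over `R` is `R` itself. -/
theorem no_goingDown_intermediate_of_apparentlyFragile {S : Type*} [CommRing S] [IsDomain S]
    (hS : IsGenKrull S) (J : Ideal S) (hfin : J.minimalPrimes.Finite)
    (hht : ∀ q, ∀ hq : q ∈ J.minimalPrimes,
      2 ≤ Order.height (⟨q, hq.1.1⟩ : PrimeSpectrum S))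
    (A : Subring (S ⧸ J)) (hint : Algebra.IsIntegral A (S ⧸ J))
    (hfrag : ApparentlyFragile A)
    (R : Subring S) (hR : R = A.comap (Ideal.Quotient.mk J)) :
    ∀ (T : Subring S) (hRT : R ≤ T), GoingDownHom (Subring.inclusion hRT) → T = R :=
  no_goingDown_intermediate_of_apparentlyFragile_general hS J hht A hint hfrag R hR
end

section
/- Let A be a zero-dimensional commutative ring with only finitely many minimal primes, and let B be an integral extension ring of A. Then the extension A ⊆ B is fragile if and only if it is apparently fragile, if and only if it is globally fragile. -/
/-!
In a zero-dimensional ring `A` with finitely many primes the prime spectrum is discrete. Hence for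
every multiplicative set `W` the primes avoiding `W` form a clopen set `D(e)` with `e` idempotent,
and localizing at `W` is localizing at `e`: `B → B_W` is surjective with kernel `(1 - e)B` and
`A_W` is the image of `A`. Primes of `B_W` are the primes of `B` not containing `e`, minimal primes
correspond, and so two primes lying over a minimal prime move back and forth between `A ⊆ C` and
`A_W ⊆ C_W`.

If `A` is fragile and `x ∈ C \ A`, localize at a maximal ideal `P` containing the conductor
`{a | a x ∈ A}`; then `e ∉ P`, so `e x ∉ A` and `C_P ≠ A_P`. If `A` is apparently fragile, an
intermediate ring `C'` of `A_W ⊆ B_W` is the image of `C = {b | φ b ∈ C', (1 - e) b ∈ A}`; as `C`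
and `A` have the same `(1 - e)`-component, primes of `C` containing `e` are determined by their
contractions to `A`, so the split minimal prime of `A` avoids `e` and the splitting survives in
`B_W`.
-/

lemma discreteTopology_primeSpectrum_of_forall_isMaximal {R : Type*} [CommRing R]
    (hdim : ∀ P : Ideal R, P.IsPrime → P.IsMaximal) (hfin : (minimalPrimes R).Finite) :
    DiscreteTopology (PrimeSpectrum R) := by
  have := Ring.KrullDimLE.mk₀ hdim
  rw [PrimeSpectrum.discreteTopology_iff_finite_and_krullDimLE_zero]
  refine ⟨?_, this⟩
  rw [Ring.KrullDimLE.minimalPrimes_eq_setOfPred_isPrime] at hfin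
  have := hfin.to_subtype
  exact .of_injective (fun q : PrimeSpectrum R => (⟨q.asIdeal, q.2⟩ : {I : Ideal R | I.IsPrime}))
    fun p q h => PrimeSpectrum.ext (congrArg Subtype.val h)

lemma exists_isIdempotentElem_notMem_iff_disjoint {R : Type*} [CommRing R]
    [DiscreteTopology (PrimeSpectrum R)] (W : Submonoid R) :
    ∃ e : R, IsIdempotentElem e ∧ ∀ q : Ideal R, q.IsPrime → (e ∉ q ↔ Disjoint (W : Set R) q) := by
  obtain ⟨e, he, hs⟩ := PrimeSpectrum.exists_idempotent_basicOpen_eq_of_isClopen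
    (isClopen_discrete {q : PrimeSpectrum R | Disjoint (W : Set R) q.asIdeal})
  exact ⟨e, he, fun q hq => (Set.ext_iff.mp hs ⟨q, hq⟩).symm⟩

section BasicOpen

variable {R : Type*} [CommRing R] {W : Submonoid R} {e : R}
  (hW : ∀ q : Ideal R, q.IsPrime → (e ∉ q ↔ Disjoint (W : Set R) q))
include hW

lemma exists_mem_submonoid_dvd : ∃ w ∈ W, e ∣ w := by
  by_contra! h
  have hdisj : Disjoint ((Ideal.span {e} : Ideal R) : Set R) W :=
    Set.disjoint_left.mpr fun w hw hwW => h w hwW (Ideal.mem_span_singleton.mp hw)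
  obtain ⟨q, hq, heq, hqW⟩ := Ideal.exists_le_prime_disjoint _ W hdisj
  exact ((hW q hq).mpr hqW.symm) (heq (Ideal.mem_span_singleton_self e))

lemma dvd_of_mem_submonoid (he : IsIdempotentElem e) {v : R} (hv : v ∈ W) : v ∣ e := by
  by_contra h
  obtain ⟨q, hq, hvq, heq⟩ := Ideal.exists_le_prime_notMem_of_isIdempotentElem e he
    (I := Ideal.span {v}) (by rwa [Ideal.mem_span_singleton])
  exact Set.disjoint_left.mp ((hW q hq).mp heq) hv (hvq (Ideal.mem_span_singleton_self v))

end BasicOpen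

lemma IsLocalization.away_of_dvd {R S : Type*} [CommRing R] [CommRing S] [Algebra R S]
    {M : Submonoid R} [IsLocalization M S] {e : R}
    (hM : ∃ w ∈ M, e ∣ w) (he : ∀ v ∈ M, v ∣ e) : IsLocalization.Away e S := by
  obtain ⟨w, hwM, hew⟩ := hM
  have hN : IsLocalization (M ⊔ Submonoid.powers e) S := by
    refine IsLocalization.of_le_of_exists_dvd M _ le_sup_left fun n hn => ?_
    obtain ⟨m, hm, _, ⟨k, rfl⟩, rfl⟩ := Submonoid.mem_sup.mp hn
    exact ⟨m * w ^ k, M.mul_mem hm (pow_mem hwM k), mul_dvd_mul_left m (pow_dvd_pow_of_dvd hew k)⟩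
  refine (IsLocalization.iff_of_le_of_exists_dvd _ _ le_sup_right fun n hn => ?_).mpr hN
  obtain ⟨m, hm, _, ⟨k, rfl⟩, rfl⟩ := Submonoid.mem_sup.mp hn
  exact ⟨e ^ (k + 1), ⟨k + 1, rfl⟩, by rw [pow_succ']; exact mul_dvd_mul_right (he m hm) _⟩

section AwayIdempotent

variable {R S : Type*} [CommRing R] [CommRing S] [Algebra R S] {e : R} [IsLocalization.Away e S]

lemma IsLocalization.Away.algebraMap_eq_zero_iff_of_isIdempotentElem (he : IsIdempotentElem e)
    (x : R) : algebraMap R S x = 0 ↔ e * x = 0 := by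
  rw [IsLocalization.map_eq_zero_iff (Submonoid.powers e)]
  constructor
  · rintro ⟨⟨_, n, rfl⟩, hn : e ^ n * x = 0⟩
    rw [← he.pow_succ_eq n, pow_succ', mul_assoc, hn, mul_zero]
  · exact fun h => ⟨⟨e, Submonoid.mem_powers e⟩, h⟩

lemma IsLocalization.Away.algebraMap_eq_one_of_isIdempotentElem (he : IsIdempotentElem e) :
    algebraMap R S e = 1 :=
  (IsIdempotentElem.iff_eq_one_of_isUnit (IsLocalization.Away.algebraMap_isUnit e)).mp
    (he.map (algebraMap R S))

end AwayIdempotent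

section SubringLocalization

variable {B : Type*} [CommRing B] (A : Subring B) {W : Submonoid A} {e : A}
  (hWe : ∃ w ∈ W, e ∣ w) (hW : ∀ v ∈ W, v ∣ e)
include hWe hW

lemma away_localization_map_subtype :
    IsLocalization.Away (e : B) (Localization (W.map A.subtype)) := by
  obtain ⟨w, hw, hew⟩ := hWe
  refine IsLocalization.away_of_dvd (M := W.map A.subtype)
    ⟨w, Submonoid.mem_map_of_mem _ hw, map_dvd A.subtype hew⟩ ?_
  rintro _ ⟨v, hv, rfl⟩
  exact map_dvd A.subtype (hW v hv)

lemma range_locMap_eq_map (he : IsIdempotentElem e) :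
    (locMap A W).range = A.map (algebraMap B (Localization (W.map A.subtype))) := by
  have := IsLocalization.away_of_dvd (S := Localization W) hWe hW
  have hcomp : (locMap A W).comp (algebraMap A (Localization W)) =
      (algebraMap B (Localization (W.map A.subtype))).comp A.subtype :=
    IsLocalization.lift_comp _
  rw [RingHom.range_eq_map, ← RingHom.range_eq_top_of_surjective _
    (IsLocalization.Away.algebraMap_surjective_of_isIdempotentElem e he), RingHom.map_range,
    hcomp, ← RingHom.map_range, Subring.range_subtype]

end SubringLocalization

lemma Subring.exists_isIdempotentElem_away {B : Type*} [CommRing B] (A : Subring B)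
    [DiscreteTopology (PrimeSpectrum A)] (W : Submonoid A) :
    ∃ e : A, IsIdempotentElem e ∧ (∀ q : Ideal A, q.IsPrime → (e ∉ q ↔ Disjoint (W : Set A) q)) ∧
      IsLocalization.Away (e : B) (Localization (W.map A.subtype)) ∧
      (locMap A W).range = A.map (algebraMap B (Localization (W.map A.subtype))) := by
  obtain ⟨e, he, hW⟩ := exists_isIdempotentElem_notMem_iff_disjoint W
  have hWe := exists_mem_submonoid_dvd hW
  have hdvd := fun v => dvd_of_mem_submonoid (v := v) hW he
  exact ⟨e, he, hW, away_localization_map_subtype A hWe hdvd, range_locMap_eq_map A hWe hdvd he⟩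

section MinimalPrimes

variable {R S : Type*} [CommRing R] [CommRing S] {f : R →+* S} {e : R}
  (hker : ∀ x, f x = 0 → e * x = 0)
include hker

lemma ker_le_of_notMem {q : Ideal R} (hq : q.IsPrime) (he : e ∉ q) : RingHom.ker f ≤ q :=
  fun x hx => (hq.mem_or_mem (hker x hx ▸ q.zero_mem)).resolve_left he

lemma comap_mem_minimalPrimes_of_notMem (hf : Function.Surjective f) {p : Ideal S}
    (hp : p ∈ minimalPrimes S) (he : e ∉ p.comap f) : p.comap f ∈ minimalPrimes R := by
  have hpk := Ideal.minimalPrimes_comap_of_surjective hf hp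
  rw [← RingHom.ker_eq_comap_bot] at hpk
  exact ⟨⟨hpk.1.1, bot_le⟩, fun q hq hqp =>
    hpk.2 ⟨hq.1, ker_le_of_notMem hker hq.1 fun heq => he (hqp heq)⟩ hqp⟩

lemma map_mem_minimalPrimes_of_notMem (hf : Function.Surjective f) {p : Ideal R}
    (hp : p ∈ minimalPrimes R) (he : e ∉ p) : p.map f ∈ minimalPrimes S := by
  have hpk : p ∈ (RingHom.ker f).minimalPrimes :=
    ⟨⟨hp.isPrime, ker_le_of_notMem hker hp.isPrime he⟩, fun q hq hqp => hp.2 ⟨hq.1, bot_le⟩ hqp⟩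
  have hmin := Ideal.minimalPrimes_map_of_surjective hf ⊥
  rw [Ideal.map_bot, bot_sup_eq] at hmin
  exact (hmin ▸ ⟨p, hpk, rfl⟩ : p.map f ∈ (⊥ : Ideal S).minimalPrimes)

end MinimalPrimes

/-- `ApparentlyFragile A` unfolds to `SplitsMinimalPrime (Subring.inclusion hAC)` for all `A < C`. -/
def SplitsMinimalPrime {R T : Type*} [CommRing R] [CommRing T] (i : R →+* T) : Prop :=
  ∃ p ∈ minimalPrimes R, ∃ P Q : Ideal T, P.IsPrime ∧ Q.IsPrime ∧ P ≠ Q ∧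
    P.comap i = p ∧ Q.comap i = p

section Square

variable {R T R' T' : Type*} [CommRing R] [CommRing T] [CommRing R'] [CommRing T']
  {i : R →+* T} {i' : R' →+* T'} {f : R →+* R'} {g : T →+* T'} (hsq : g.comp i = i'.comp f)
  (hf : Function.Surjective f) (hg : Function.Surjective g) {e : R}
  (hker : ∀ x, f x = 0 → e * x = 0)
include hsq hf hg hker

lemma SplitsMinimalPrime.of_comp (hfe : f e = 1) (h : SplitsMinimalPrime i') :
    SplitsMinimalPrime i := by
  obtain ⟨p', hp', P', Q', hP', hQ', hne, hP, hQ⟩ := h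
  have he : e ∉ p'.comap f := by
    rw [Ideal.mem_comap, hfe]
    exact hp'.isPrime.one_notMem
  refine ⟨p'.comap f, comap_mem_minimalPrimes_of_notMem hker hf hp' he, P'.comap g, Q'.comap g,
    hP'.comap g, hQ'.comap g, fun h => hne (Ideal.comap_injective_of_surjective g hg h), ?_, ?_⟩
  · rw [Ideal.comap_comap, hsq, ← Ideal.comap_comap, hP]
  · rw [Ideal.comap_comap, hsq, ← Ideal.comap_comap, hQ]

lemma splitsMinimalPrime_of_notMem (hgker : ∀ y, g y = 0 → i e * y = 0) {p : Ideal R}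
    (hp : p ∈ minimalPrimes R) (he : e ∉ p) {P Q : Ideal T} [P.IsPrime] [Q.IsPrime]
    (hPQ : P ≠ Q) (hP : P.comap i = p) (hQ : Q.comap i = p) : SplitsMinimalPrime i' := by
  have ker_le {P : Ideal T} [P.IsPrime] (hP : P.comap i = p) : RingHom.ker g ≤ P :=
    ker_le_of_notMem hgker ‹_› fun h => he (hP ▸ h)
  have comap_map {P : Ideal T} [P.IsPrime] (hP : P.comap i = p) : (P.map g).comap g = P :=
    (Ideal.comap_map_of_surjective' g hg P).trans (sup_eq_left.mpr (ker_le hP))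
  have contract_map {P : Ideal T} [P.IsPrime] (hP : P.comap i = p) :
      (P.map g).comap i' = p.map f := by
    refine Ideal.comap_injective_of_surjective f hf ?_
    rw [Ideal.comap_comap, ← hsq, ← Ideal.comap_comap, comap_map hP, hP,
      Ideal.comap_map_of_surjective' f hf, sup_eq_left.mpr (ker_le_of_notMem hker hp.isPrime he)]
  refine ⟨p.map f, map_mem_minimalPrimes_of_notMem hker hf hp he, P.map g, Q.map g,
    Ideal.map_isPrime_of_surjective hg (ker_le hP), Ideal.map_isPrime_of_surjective hg (ker_le hQ),
    fun h => hPQ ?_, contract_map hP, contract_map hQ⟩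
  rw [← comap_map hP, ← comap_map hQ, h]

end Square

lemma Ideal.eq_of_comap_eq_of_forall_sub_mem {R T : Type*} [CommRing R] [CommRing T]
    (i : R →+* T) {J P Q : Ideal T} (hJ : ∀ y, ∃ x, y - i x ∈ J) (hP : J ≤ P) (hQ : J ≤ Q)
    (h : P.comap i = Q.comap i) : P = Q := by
  ext y
  obtain ⟨x, hx⟩ := hJ y
  have mem_iff {P : Ideal T} (hP : J ≤ P) : y ∈ P ↔ x ∈ P.comap i := by
    rw [Ideal.mem_comap, ← P.sub_mem_iff_left (hP hx), sub_sub_cancel]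
  rw [mem_iff hP, mem_iff hQ, h]

namespace Subring

variable {B : Type*} [CommRing B]

section Map

variable {B' : Type*} [CommRing B'] (φ : B →+* B')

def mapRestrict (A : Subring B) : A →+* A.map φ :=
  φ.restrict A (A.map φ) fun x hx => ⟨x, hx, rfl⟩

lemma mapRestrict_surjective (A : Subring B) : Function.Surjective (A.mapRestrict φ) := by
  rintro ⟨_, b, hb, rfl⟩
  exact ⟨⟨b, hb⟩, rfl⟩

variable {A C : Subring B} (hAC : A ≤ C) {e : A} (hker : ∀ b, φ b = 0 → (e : B) * b = 0)
include hker

lemma mul_eq_zero_of_mapRestrict_eq_zero {D : Subring B} {x : D} (hx : D.mapRestrict φ x = 0) :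
    (e : B) * x = 0 :=
  hker x (congrArg Subtype.val hx)

lemma splitsMinimalPrime_of_map (hφe : φ e = 1)
    (h : SplitsMinimalPrime (inclusion ((gc_map_comap φ).monotone_l hAC))) :
    SplitsMinimalPrime (inclusion hAC) :=
  h.of_comp (f := A.mapRestrict φ) (g := C.mapRestrict φ) (RingHom.ext fun _ => rfl)
    (A.mapRestrict_surjective φ) (C.mapRestrict_surjective φ)
    (fun _ hx => Subtype.ext (mul_eq_zero_of_mapRestrict_eq_zero φ hker hx)) (Subtype.ext hφe)

lemma splitsMinimalPrime_map_of_notMem {C' : Subring B'} (hC : C.map φ = C')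
    (hAC' : A.map φ ≤ C') {p : Ideal A} (hp : p ∈ minimalPrimes A) (he : e ∉ p)
    {P Q : Ideal C} [P.IsPrime] [Q.IsPrime] (hPQ : P ≠ Q) (hP : P.comap (inclusion hAC) = p)
    (hQ : Q.comap (inclusion hAC) = p) : SplitsMinimalPrime (inclusion hAC') := by
  subst hC
  exact splitsMinimalPrime_of_notMem (f := A.mapRestrict φ) (g := C.mapRestrict φ)
    (RingHom.ext fun _ => rfl) (A.mapRestrict_surjective φ) (C.mapRestrict_surjective φ)
    (fun _ hx => Subtype.ext (mul_eq_zero_of_mapRestrict_eq_zero φ hker hx))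
    (fun _ hx => Subtype.ext (mul_eq_zero_of_mapRestrict_eq_zero φ hker hx)) hp he hPQ hP hQ

end Map

def mulLeftPreimage (A : Subring B) {f : B} (hf : IsIdempotentElem f) (hfA : f ∈ A) :
    Subring B where
  carrier := {b | f * b ∈ A}
  mul_mem' {b c} hb hc := by
    rw [Set.mem_ofPred_eq, ← hf.eq, mul_mul_mul_comm]
    exact A.mul_mem hb hc
  one_mem' := by simpa using hfA
  add_mem' hb hc := by simpa only [Set.mem_ofPred_eq, mul_add] using A.add_mem hb hc
  zero_mem' := by simp
  neg_mem' hb := by simpa using A.neg_mem hb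

lemma eq_of_comap_inclusion_eq {A C : Subring B} (hAC : A ≤ C) {e : A}
    (hC : ∀ c ∈ C, (1 - (e : B)) * c ∈ A) {P Q : Ideal C}
    (heP : e ∈ P.comap (inclusion hAC))
    (h : P.comap (inclusion hAC) = Q.comap (inclusion hAC)) : P = Q := by
  refine Ideal.eq_of_comap_eq_of_forall_sub_mem (inclusion hAC)
    (J := Ideal.span {inclusion hAC e}) (fun c => ⟨⟨_, hC c c.2⟩, ?_⟩) ?_ ?_ h
  · refine Ideal.mem_span_singleton'.mpr ⟨c, Subtype.ext ?_⟩
    simp only [coe_mul, coe_inclusion, AddSubgroupClass.coe_sub]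
    ring
  · exact (Ideal.span_singleton_le_iff_mem _).mpr heP
  · exact (Ideal.span_singleton_le_iff_mem _).mpr (h ▸ heP : e ∈ Q.comap (inclusion hAC))

lemma exists_isMaximal_forall_mul_mem (A : Subring B) {x : B} (hx : x ∉ A) :
    ∃ P : Ideal A, P.IsMaximal ∧ ∀ a : A, (a : B) * x ∈ A → a ∈ P := by
  have hI : (1 : Submodule A B).colon {x} ≠ ⊤ := fun h => hx <| by
    obtain ⟨y, hy⟩ := Submodule.mem_one.mp
      (Submodule.mem_colon_singleton.mp (h ▸ Submodule.mem_top : (1 : A) ∈ _))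
    rw [one_smul] at hy
    exact hy ▸ y.2
  obtain ⟨P, hP, hle⟩ := Ideal.exists_le_maximal _ hI
  exact ⟨P, hP, fun a ha => hle (Submodule.mem_colon_singleton.mpr
    (Submodule.mem_one.mpr ⟨⟨_, ha⟩, rfl⟩))⟩

variable (A : Subring B) [DiscreteTopology (PrimeSpectrum A)]

theorem apparentlyFragile_of_fragile (h : Fragile A) : ApparentlyFragile A := by
  intro C hAC hne
  obtain ⟨x, hxC, hxA⟩ := SetLike.exists_of_lt (lt_of_le_of_ne hAC hne)
  obtain ⟨P, hP, hxP⟩ := A.exists_isMaximal_forall_mul_mem hxA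
  obtain ⟨e, he, hD, _, hrange⟩ := A.exists_isIdempotentElem_away P.primeCompl
  have heB : IsIdempotentElem (e : B) := he.map A.subtype
  have heP : e ∉ P := (hD P hP.isPrime).mpr (Set.disjoint_left.mpr fun _ h => h)
  set φ := algebraMap B (Localization (P.primeCompl.map A.subtype))
  have hker (b : B) : φ b = 0 → (e : B) * b = 0 :=
    (IsLocalization.Away.algebraMap_eq_zero_iff_of_isIdempotentElem heB b).mp
  have hAF := h P hP.isPrime
  rw [hrange] at hAF
  have hne' : A.map φ ≠ C.map φ := by
    intro hEq
    obtain ⟨a, ha, hax⟩ := (hEq ▸ ⟨x, hxC, rfl⟩ : φ x ∈ A.map φ)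
    have hex : (e : B) * x = e * a := by
      linear_combination hker (x - a) (by rw [map_sub, hax, sub_self])
    exact heP (hxP e (hex ▸ A.mul_mem e.2 ha))
  exact splitsMinimalPrime_of_map φ hAC hker
    (IsLocalization.Away.algebraMap_eq_one_of_isIdempotentElem heB) (hAF _ _ hne')

theorem globallyFragile_of_apparentlyFragile (h : ApparentlyFragile A) : GloballyFragile A := by
  intro W
  obtain ⟨e, he, -, _, hrange⟩ := A.exists_isIdempotentElem_away W
  have heB : IsIdempotentElem (e : B) := he.map A.subtype
  set φ := algebraMap B (Localization (W.map A.subtype))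
  have hker (b : B) : φ b = 0 ↔ (e : B) * b = 0 :=
    IsLocalization.Away.algebraMap_eq_zero_iff_of_isIdempotentElem heB b
  have hφe : φ e = 1 := IsLocalization.Away.algebraMap_eq_one_of_isIdempotentElem heB
  have h1e : 1 - (e : B) ∈ A := A.sub_mem A.one_mem e.2
  rw [hrange]
  intro C' hAC' hne'
  let C := C'.comap φ ⊓ A.mulLeftPreimage heB.one_sub h1e
  have hAC : A ≤ C := fun a ha => ⟨hAC' ⟨a, ha, rfl⟩, A.mul_mem h1e ha⟩
  have hCmap : C.map φ = C' := by
    refine le_antisymm (map_le_iff_le_comap.mpr inf_le_left) fun y hy => ?_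
    obtain ⟨b, rfl⟩ := IsLocalization.Away.algebraMap_surjective_of_isIdempotentElem _ heB y
    have hφeb : φ (e * b) = φ b := by rw [map_mul, hφe, one_mul]
    refine ⟨e * b, ⟨show φ (e * b) ∈ C' from hφeb ▸ hy, ?_⟩, hφeb⟩
    show (1 - (e : B)) * (e * b) ∈ A
    rw [← mul_assoc, mul_comm _ (e : B), heB.mul_one_sub_self, zero_mul]
    exact A.zero_mem
  obtain ⟨p, hp, P, Q, hP, hQ, hPQ, hPp, hQp⟩ :=
    h C hAC fun hEq => hne' (hCmap ▸ congrArg (map φ) hEq)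
  by_cases hep : e ∈ p
  · exact absurd (eq_of_comap_inclusion_eq hAC (fun c hc => hc.2) (hPp ▸ hep)
      (hPp.trans hQp.symm)) hPQ
  · exact splitsMinimalPrime_map_of_notMem φ hAC (fun b => (hker b).mp) hCmap hAC' hp hep
      hPQ hPp hQp

end Subring

theorem fragilities_coincide_of_dimZero_general {B : Type*} [CommRing B] (A : Subring B)
    (hdim : ∀ P : Ideal A, P.IsPrime → P.IsMaximal)
    (hfin : (minimalPrimes A).Finite) :
    (Fragile A ↔ ApparentlyFragile A) ∧ (ApparentlyFragile A ↔ GloballyFragile A) := by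
  have := discreteTopology_primeSpectrum_of_forall_isMaximal hdim hfin
  have hFA := A.apparentlyFragile_of_fragile
  have hAG := A.globallyFragile_of_apparentlyFragile
  have hGF : GloballyFragile A → Fragile A := fun h P _ => h _
  exact ⟨⟨hFA, hGF ∘ hAG⟩, ⟨hAG, hFA ∘ hGF⟩⟩

/-- For a zero-dimensional ring `A` with finitely many minimal primes and an
integral extension `A ⊆ B`, the three notions of fragility coincide. -/
theorem fragilities_coincide_of_dimZero {B : Type*} [CommRing B] (A : Subring B)
    (hint : Algebra.IsIntegral A B)
    (hdim : ∀ P : Ideal A, P.IsPrime → P.IsMaximal)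
    (hfin : (minimalPrimes A).Finite) :
    (Fragile A ↔ ApparentlyFragile A) ∧ (ApparentlyFragile A ↔ GloballyFragile A) :=
  fragilities_coincide_of_dimZero_general A hdim hfin
end

section
/- Let A ⊆ B be an apparently fragile integral ring extension. Assume there is a minimal prime p of A such that (1) only finitely many primes of B lie over p, and (2) for every minimal prime q of A other than p, exactly one prime of B contracts to q. Then pB = p (i.e., p is an ideal of B), and the extension A ⊆ B is globally fragile. -/
/-!
Integrality lifts every prime of an intermediate ring `A ⊆ C ⊆ B` to `B`, so uniqueness over the
minimal primes `q ≠ p` forces every pair of distinct primes of `C` given by apparent fragility to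
lie over `p`. For `C = A + pB` such primes contain `pB` and are determined by their contraction
to `A`, hence `A + pB = A`, i.e. `pB = p`. If `W` meets `p` in `w`, then `wB ⊆ pB ⊆ A` and
`A_W = B_W`. Otherwise every ring between `A_W` and `B_W` is the localization at `W` of its
preimage in `B`, and the two primes of that preimage over `p` localize to distinct primes over the
minimal prime `pA_W`.
-/

open Ideal

section LyingOver

variable {B : Type*} [CommRing B] {A C : Subring B}

theorem Subring.isIntegral_of_le (hint : Algebra.IsIntegral A B) (hAC : A ≤ C) :
    Algebra.IsIntegral C B :=
  ⟨fun b => (hint.isIntegral b).map_of_comp_eq (Subring.inclusion hAC) (RingHom.id B) rfl⟩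

theorem Subring.exists_isPrime_comap_subtype_eq (hint : Algebra.IsIntegral A B) (hAC : A ≤ C)
    (P : Ideal C) [P.IsPrime] : ∃ P' : Ideal B, P'.IsPrime ∧ P'.comap C.subtype = P := by
  have := Subring.isIntegral_of_le hint hAC
  obtain ⟨P', -, hP', hP'P⟩ := exists_ideal_over_prime_of_isIntegral P (⊥ : Ideal B)
    (comap_bot_le_of_injective _ Subtype.val_injective)
  exact ⟨P', hP', hP'P⟩

theorem Subring.comap_subtype_map_le_of_comap_eq (hint : Algebra.IsIntegral A B) (hAC : A ≤ C)
    {p : Ideal A} {P : Ideal C} [P.IsPrime] (hP : P.comap (Subring.inclusion hAC) = p) :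
    (p.map A.subtype).comap C.subtype ≤ P := by
  obtain ⟨P', -, rfl⟩ := Subring.exists_isPrime_comap_subtype_eq hint hAC P
  exact comap_mono (Ideal.map_le_iff_le_comap.mpr (le_of_eq hP.symm : p ≤ P'.comap A.subtype))

end LyingOver

section ApparentlyFragileAt

variable {B : Type*} [CommRing B] {A : Subring B} {p : Ideal A}

def ApparentlyFragileAt (A : Subring B) (p : Ideal A) : Prop :=
  ∀ (C : Subring B) (hAC : A ≤ C), A ≠ C →
    ∃ P Q : Ideal C, P.IsPrime ∧ Q.IsPrime ∧ P ≠ Q ∧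
      P.comap (Subring.inclusion hAC) = p ∧ Q.comap (Subring.inclusion hAC) = p

/-- Two distinct primes of `C` over `q` lift to two distinct primes of `B` over `q`. -/
theorem ApparentlyFragile.apparentlyFragileAt (hint : Algebra.IsIntegral A B)
    (hfrag : ApparentlyFragile A)
    (huniq : ∀ q ∈ minimalPrimes A, q ≠ p → ∃! Q : Ideal B, Q.IsPrime ∧ Q.comap A.subtype = q) :
    ApparentlyFragileAt A p := by
  intro C hAC hne
  obtain ⟨q, hq, P, Q, hP, hQ, hPQ, hPq, hQq⟩ := hfrag C hAC hne
  obtain rfl : q = p := by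
    by_contra hqp
    obtain ⟨P', hP', rfl⟩ := Subring.exists_isPrime_comap_subtype_eq hint hAC P
    obtain ⟨Q', hQ', rfl⟩ := Subring.exists_isPrime_comap_subtype_eq hint hAC Q
    obtain ⟨_, -, hunique⟩ := huniq q hq hqp
    exact hPQ (congrArg _ ((hunique P' ⟨hP', hPq⟩).trans (hunique Q' ⟨hQ', hQq⟩).symm))
  exact ⟨P, Q, hP, hQ, hPQ, hPq, hQq⟩

end ApparentlyFragileAt

section ExtendedIdeal

variable {B : Type*} [CommRing B]

theorem Ideal.eq_of_comap_eq_of_forall_exists_sub_mem {R S : Type*} [CommRing R] [CommRing S]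
    {f : R →+* S} {J P Q : Ideal S} (hf : ∀ x, ∃ a, x - f a ∈ J) (hJP : J ≤ P) (hJQ : J ≤ Q)
    (h : P.comap f = Q.comap f) : P = Q := by
  ext x
  obtain ⟨a, ha⟩ := hf x
  have key : ∀ I : Ideal S, J ≤ I → (x ∈ I ↔ a ∈ I.comap f) := fun I hJI => by
    rw [mem_comap]
    exact ⟨fun hx => by simpa using I.sub_mem hx (hJI ha),
      fun hfa => by simpa using I.add_mem (hJI ha) hfa⟩
  rw [key P hJP, key Q hJQ, h]

/-- The subring `A + I` of `B`. -/
def Subring.addIdeal (A : Subring B) (I : Ideal B) : Subring B :=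
  (A.map (Ideal.Quotient.mk I)).comap (Ideal.Quotient.mk I)

theorem Subring.mem_addIdeal {A : Subring B} {I : Ideal B} {x : B} :
    x ∈ A.addIdeal I ↔ ∃ a ∈ A, x - a ∈ I := by
  simp only [addIdeal, mem_comap, mem_map, Ideal.Quotient.eq]
  exact exists_congr fun a => and_congr_right fun _ => sub_mem_comm_iff

/-- `A + pB = A`, since two primes of `A + pB` over `p` both contain `pB` and `A` maps onto
`(A + pB) / pB`. -/
theorem ApparentlyFragileAt.coe_map_subtype {A : Subring B} {p : Ideal A} [p.IsPrime]
    (hint : Algebra.IsIntegral A B) (h : ApparentlyFragileAt A p) :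
    ((p.map A.subtype : Ideal B) : Set B) = (fun x : A => (x : B)) '' (p : Set A) := by
  set I : Ideal B := p.map A.subtype
  have hAC : A ≤ A.addIdeal I := fun a ha => Subring.mem_addIdeal.mpr ⟨a, ha, by simp⟩
  have hA_eq : A = A.addIdeal I := by
    by_contra hne
    obtain ⟨P, Q, hP, hQ, hPQ, hPp, hQp⟩ := h _ hAC hne
    refine hPQ (eq_of_comap_eq_of_forall_exists_sub_mem (f := Subring.inclusion hAC) ?_
      (Subring.comap_subtype_map_le_of_comap_eq hint hAC hPp)
      (Subring.comap_subtype_map_le_of_comap_eq hint hAC hQp) (hPp.trans hQp.symm))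
    rintro ⟨x, hx⟩
    obtain ⟨a, ha, hxa⟩ := Subring.mem_addIdeal.mp hx
    exact ⟨⟨a, ha⟩, hxa⟩
  have hpB_le : I.comap A.subtype ≤ p :=
    Subring.comap_subtype_map_le_of_comap_eq hint le_rfl (P := p) rfl
  ext x
  constructor
  · intro hx
    have hxA : x ∈ A := hA_eq ▸ Subring.mem_addIdeal.mpr ⟨0, zero_mem _, by simpa using hx⟩
    exact ⟨⟨x, hxA⟩, hpB_le hx, rfl⟩
  · rintro ⟨a, ha, rfl⟩
    exact mem_map_of_mem _ ha

end ExtendedIdeal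

section Localization

variable {B : Type*} [CommRing B]

theorem IsLocalization.comap_map_eq_map_comap {R S T U : Type*} [CommRing R] [CommRing S]
    [CommRing T] [CommRing U] [Algebra R T] [Algebra S U] (M : Submonoid R) [IsLocalization M T]
    (N : Submonoid S) [IsLocalization N U] {φ : R →+* S} {ψ : T →+* U}
    (hsq : ψ.comp (algebraMap R T) = (algebraMap S U).comp φ) {P : Ideal S} (hP : P.IsPrime)
    (hN : Disjoint (N : Set S) P) :
    (P.map (algebraMap S U)).comap ψ = (P.comap φ).map (algebraMap R T) := by
  rw [← IsLocalization.map_under M T ((P.map (algebraMap S U)).comap ψ), Ideal.under,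
    comap_comap, hsq, ← comap_comap]
  exact congrArg (fun I => (I.comap φ).map (algebraMap R T))
    (IsLocalization.under_map_of_isPrime_disjoint N U hP hN)

theorem IsLocalization.map_mem_minimalPrimes {R T : Type*} [CommRing R] [CommRing T]
    [Algebra R T] (M : Submonoid R) [IsLocalization M T] {p : Ideal R} (hp : p ∈ minimalPrimes R)
    (hM : Disjoint (M : Set R) p) : p.map (algebraMap R T) ∈ minimalPrimes T := by
  have h := IsLocalization.minimalPrimes_map M T (⊥ : Ideal R)
  rw [Ideal.map_bot] at h
  change _ ∈ (⊥ : Ideal T).minimalPrimes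
  rw [h, Set.mem_preimage, IsLocalization.under_map_of_isPrime_disjoint M T hp.1.1 hM]
  exact hp

theorem IsLocalization.exists_ne_isPrime_comap_eq_map {R S T U : Type*} [CommRing R]
    [CommRing S] [CommRing T] [CommRing U] [Algebra R T] [Algebra S U] (M : Submonoid R)
    [IsLocalization M T] {φ : R →+* S} [IsLocalization (M.map φ) U] {ψ : T →+* U}
    (hsq : ψ.comp (algebraMap R T) = (algebraMap S U).comp φ) {p : Ideal R}
    (hM : Disjoint (M : Set R) p) {P Q : Ideal S} (hP : P.IsPrime) (hQ : Q.IsPrime) (hPQ : P ≠ Q)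
    (hPp : P.comap φ = p) (hQp : Q.comap φ = p) :
    ∃ P' Q' : Ideal U, P'.IsPrime ∧ Q'.IsPrime ∧ P' ≠ Q' ∧
      P'.comap ψ = p.map (algebraMap R T) ∧ Q'.comap ψ = p.map (algebraMap R T) := by
  have hdisj : ∀ I : Ideal S, I.comap φ = p → Disjoint ((M.map φ : Submonoid S) : Set S) I :=
    fun I hIp => by
      rw [Submonoid.coe_map, Set.disjoint_image_left]
      subst hIp
      exact hM
  have hunder : ∀ {I : Ideal S}, I.IsPrime → I.comap φ = p →
      (I.map (algebraMap S U)).under S = I :=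
    fun hI hIp => under_map_of_isPrime_disjoint _ U hI (hdisj _ hIp)
  have hcomap : ∀ {I : Ideal S}, I.IsPrime → I.comap φ = p →
      (I.map (algebraMap S U)).comap ψ = p.map (algebraMap R T) :=
    fun hI hIp => by rw [comap_map_eq_map_comap M (M.map φ) hsq hI (hdisj _ hIp), hIp]
  refine ⟨P.map _, Q.map _, isPrime_of_isPrime_disjoint _ U P hP (hdisj P hPp),
    isPrime_of_isPrime_disjoint _ U Q hQ (hdisj Q hQp), fun h => hPQ ?_, hcomap hP hPp,
    hcomap hQ hQp⟩
  rw [← hunder hP hPp, h, hunder hQ hQp]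

theorem Subring.isLocalization_of_forall_mem_iff {L : Type*} [CommRing L] [Algebra B L]
    {M : Submonoid B} [IsLocalization M L] {R : Subring B} (N : Submonoid R)
    (hNM : N.map R.subtype = M) (T : Subring L) [Algebra R T]
    (halg : ∀ r : R, (algebraMap R T r : L) = algebraMap B L r)
    (hT : ∀ x, x ∈ T ↔ ∃ r : R, ∃ n ∈ N, x * algebraMap B L (n : B) = algebraMap B L r) :
    IsLocalization N T := by
  have hmemM : ∀ n : N, (n : B) ∈ M := fun n => hNM ▸ ⟨n, n.2, rfl⟩
  refine ⟨fun n => ?_, fun z => ?_, fun {r r'} hrr' => ?_⟩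
  · have hinv : IsLocalization.mk' L (1 : B) ⟨n, hmemM n⟩ ∈ T :=
      (hT _).mpr ⟨1, n, n.2, by rw [IsLocalization.mk'_spec]; simp⟩
    refine IsUnit.of_mul_eq_one ⟨_, hinv⟩ (Subtype.ext ?_)
    rw [Subring.coe_mul, halg, Subring.coe_one, mul_comm, IsLocalization.mk'_spec, map_one]
  · obtain ⟨r, n, hn, hz⟩ := (hT z).mp z.2
    exact ⟨(r, ⟨n, hn⟩), Subtype.ext (by rw [Subring.coe_mul, halg, halg]; exact hz)⟩
  · have h : algebraMap B L r = algebraMap B L r' := by rw [← halg, ← halg, hrr']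
    obtain ⟨⟨m, hm⟩, hmr⟩ := (IsLocalization.eq_iff_exists M L).mp h
    obtain ⟨n, hn, rfl⟩ := hNM ▸ hm
    exact ⟨⟨n, hn⟩, Subtype.ext hmr⟩

variable (A : Subring B) (W : Submonoid A)

theorem locMap_algebraMap (a : A) :
    locMap A W (algebraMap A _ a) = algebraMap B (Localization (W.map A.subtype)) a := by
  unfold locMap
  exact IsLocalization.lift_eq _ _

theorem locMap_mk'_mul (a : A) (w : W) :
    locMap A W (IsLocalization.mk' _ a w) * algebraMap B _ (w : B) =
      algebraMap B (Localization (W.map A.subtype)) a := by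
  rw [← locMap_algebraMap, ← locMap_algebraMap, ← map_mul, IsLocalization.mk'_spec]

theorem mem_locMap_range {x : Localization (W.map A.subtype)} :
    x ∈ (locMap A W).range ↔ ∃ a : A, ∃ w ∈ W,
      x * algebraMap B _ (w : B) = algebraMap B _ (a : B) := by
  constructor
  · rintro ⟨y, rfl⟩
    obtain ⟨⟨a, w⟩, rfl⟩ := IsLocalization.mk'_surjective W y
    exact ⟨a, w, w.2, locMap_mk'_mul A W a w⟩
  · rintro ⟨a, w, hw, hx⟩
    have hu : IsUnit (algebraMap B (Localization (W.map A.subtype)) (w : B)) :=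
      IsLocalization.map_units (M := W.map A.subtype) _ ⟨(w : B), w, hw, rfl⟩
    exact ⟨IsLocalization.mk' _ a ⟨w, hw⟩,
      hu.mul_right_cancel ((locMap_mk'_mul A W a ⟨w, hw⟩).trans hx.symm)⟩

theorem algebraMap_mem_locMap_range (a : A) :
    algebraMap B (Localization (W.map A.subtype)) a ∈ (locMap A W).range :=
  (mem_locMap_range A W).mpr ⟨a, 1, one_mem _, by simp⟩

variable {A W}

theorem locMap_range_eq_top {w : A} (hw : w ∈ W) (hwB : ∀ b : B, b * w ∈ A) :
    (locMap A W).range = ⊤ := by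
  refine eq_top_iff.mpr fun x _ => ?_
  obtain ⟨b, m, rfl⟩ := IsLocalization.exists_mk'_eq (W.map A.subtype) x
  obtain ⟨v, hv, hvm⟩ := m.2
  have hvm : (v : B) = m := hvm
  refine (mem_locMap_range A W).mpr ⟨⟨b * w, hwB b⟩, v * w, mul_mem hv hw, ?_⟩
  rw [Subring.coe_mul, map_mul, ← mul_assoc, hvm, IsLocalization.mk'_spec, ← map_mul]

theorem mem_iff_of_locMap_range_le {Cb : Subring (Localization (W.map A.subtype))}
    (hCb : (locMap A W).range ≤ Cb) (x : Localization (W.map A.subtype)) :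
    x ∈ Cb ↔ ∃ c ∈ Cb.comap (algebraMap B _), ∃ w ∈ W,
      x * algebraMap B _ (w : B) = algebraMap B _ c := by
  constructor
  · intro hx
    obtain ⟨b, m, rfl⟩ := IsLocalization.exists_mk'_eq (W.map A.subtype) x
    obtain ⟨v, hv, hvm⟩ := m.2
    have hb : IsLocalization.mk' (Localization (W.map A.subtype)) b m * algebraMap B _ (v : B) =
        algebraMap B _ b := by
      rw [show (v : B) = m from hvm, IsLocalization.mk'_spec]
    have hbC : algebraMap B _ b ∈ Cb :=
      hb ▸ Cb.mul_mem hx (hCb (algebraMap_mem_locMap_range A W v))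
    exact ⟨b, hbC, v, hv, hb⟩
  · rintro ⟨c, hc, w, hw, hx⟩
    have hinv : IsLocalization.mk' _ (1 : B) (⟨w, w, hw, rfl⟩ : W.map A.subtype) ∈ Cb :=
      hCb ((mem_locMap_range A W).mpr ⟨1, w, hw, by rw [IsLocalization.mk'_spec]; simp⟩)
    have hx' : x = algebraMap B _ c * IsLocalization.mk' _ (1 : B)
        (⟨w, w, hw, rfl⟩ : W.map A.subtype) := by
      rw [← hx, mul_assoc, mul_comm (algebraMap B _ _), IsLocalization.mk'_spec, map_one, mul_one]
    exact hx' ▸ Cb.mul_mem hc hinv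

theorem isLocalization_of_locMap_range_le {Cb : Subring (Localization (W.map A.subtype))}
    (hCb : (locMap A W).range ≤ Cb) (hAC : A ≤ Cb.comap (algebraMap B _))
    [Algebra (Cb.comap (algebraMap B _)) Cb]
    (halg : ∀ c, (algebraMap (Cb.comap (algebraMap B _)) Cb c : Localization (W.map A.subtype)) =
      algebraMap B _ c) :
    IsLocalization (W.map (Subring.inclusion hAC)) Cb := by
  refine Subring.isLocalization_of_forall_mem_iff (M := W.map A.subtype)
    (W.map (Subring.inclusion hAC))
    (Submonoid.ext fun _ => ⟨fun ⟨_, ⟨w, hw, rfl⟩, hx⟩ => ⟨w, hw, hx⟩,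
      fun ⟨w, hw, hx⟩ => ⟨_, ⟨w, hw, rfl⟩, hx⟩⟩) Cb halg
    fun x => (mem_iff_of_locMap_range_le hCb x).trans ⟨?_, ?_⟩
  · rintro ⟨c, hc, w, hw, hx⟩
    exact ⟨⟨c, hc⟩, _, ⟨w, hw, rfl⟩, hx⟩
  · rintro ⟨c, -, ⟨w, hw, rfl⟩, hx⟩
    exact ⟨c, c.2, w, hw, hx⟩

theorem ApparentlyFragileAt.apparentlyFragile_locMap_range {p : Ideal A}
    (hfrag : ApparentlyFragileAt A p) (hp : p ∈ minimalPrimes A) (hW : Disjoint (W : Set A) p) :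
    ApparentlyFragile (locMap A W).range := by
  intro Cb hACb hne
  let h := algebraMap B (Localization (W.map A.subtype))
  have hAC : A ≤ Cb.comap h := fun a ha => hACb (algebraMap_mem_locMap_range A W ⟨a, ha⟩)
  have hA_ne : A ≠ Cb.comap h := fun hA_eq => hne (le_antisymm hACb fun x hx => by
    obtain ⟨c, hc, w, hw, hx⟩ := (mem_iff_of_locMap_range_le hACb x).mp hx
    exact (mem_locMap_range A W).mpr ⟨⟨c, hA_eq ▸ hc⟩, w, hw, hx⟩)
  obtain ⟨P, Q, hP, hQ, hPQ, hPp, hQp⟩ := hfrag _ hAC hA_ne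
  let _ : Algebra A (locMap A W).range :=
    (h.restrict A _ fun a ha => algebraMap_mem_locMap_range A W ⟨a, ha⟩).toAlgebra
  let _ : Algebra (Cb.comap h) Cb := (h.restrict _ Cb fun _ hc => hc).toAlgebra
  have : IsLocalization W (locMap A W).range :=
    Subring.isLocalization_of_forall_mem_iff W rfl _ (fun _ => rfl) fun _ => mem_locMap_range A W
  have : IsLocalization (W.map (Subring.inclusion hAC)) Cb :=
    isLocalization_of_locMap_range_le hACb hAC fun _ => rfl
  exact ⟨_, IsLocalization.map_mem_minimalPrimes W hp hW,
    IsLocalization.exists_ne_isPrime_comap_eq_map W (ψ := Subring.inclusion hACb) rfl hW hP hQ hPQ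
      hPp hQp⟩

end Localization

theorem globallyFragile_of_apparentlyFragile_general {B : Type*} [CommRing B] (A : Subring B)
    (hint : Algebra.IsIntegral A B) (hfrag : ApparentlyFragile A)
    (p : Ideal A) (hp : p ∈ minimalPrimes A)
    (huniq : ∀ q ∈ minimalPrimes A, q ≠ p →
      ∃! Q : Ideal B, Q.IsPrime ∧ Q.comap A.subtype = q) :
    ((p.map A.subtype : Ideal B) : Set B) = (fun x : A => (x : B)) '' (p : Set A) ∧
    GloballyFragile A := by
  have := hp.1.1
  have hfrag_p := hfrag.apparentlyFragileAt hint huniq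
  have hpB := hfrag_p.coe_map_subtype hint
  refine ⟨hpB, fun W => ?_⟩
  by_cases hW : Disjoint (W : Set A) p
  · exact hfrag_p.apparentlyFragile_locMap_range hp hW
  obtain ⟨w, hwW, hwp⟩ := Set.not_disjoint_iff.mp hW
  have hwB : ∀ b : B, b * w ∈ A := fun b => by
    obtain ⟨a, -, ha⟩ := hpB.subset (mul_mem_left _ b (mem_map_of_mem A.subtype hwp))
    exact ha ▸ a.2
  rw [locMap_range_eq_top hwW hwB]
  exact fun C hC hne => (hne (top_le_iff.mp hC).symm).elim

/-- Let `A ⊆ B` be an apparently fragile integral extension, and suppose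
there is a minimal prime `p` of `A` such that only finitely many primes of `B` lie over `p`
and every other minimal prime of `A` has exactly one prime of `B` contracting to it.
Then `pB = p` (i.e. the image of `p` is an ideal of `B`) and `A ⊆ B` is globally fragile. -/
theorem globallyFragile_of_apparentlyFragile {B : Type*} [CommRing B] (A : Subring B)
    (hint : Algebra.IsIntegral A B) (hfrag : ApparentlyFragile A)
    (p : Ideal A) (hp : p ∈ minimalPrimes A)
    (hfin : {Q : Ideal B | Q.IsPrime ∧ Q.comap A.subtype = p}.Finite)
    (huniq : ∀ q ∈ minimalPrimes A, q ≠ p →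
      ∃! Q : Ideal B, Q.IsPrime ∧ Q.comap A.subtype = q) :
    ((p.map A.subtype : Ideal B) : Set B) = (fun x : A => (x : B)) '' (p : Set A) ∧
    GloballyFragile A :=
  globallyFragile_of_apparentlyFragile_general A hint hfrag p hp huniq
end

section
/- Let C ⊆ B be an integral extension of commutative rings. Then there exists a ring A with C ⊆ A ⊆ B such that the extension A ⊆ B is apparently fragile and such that under the contraction map Spec A → Spec C, every minimal prime of C has exactly one preimage in Spec A. -/
/-! Take `A` maximal, by Zorn's lemma, among the rings `C ⊆ A ⊆ B` with at most one prime over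
each minimal prime of `C`; the condition passes to directed unions because an ideal of a directed
union is determined by its contractions to the members. A prime of `A` over a minimal prime `p`
of `C` always exists (minimal primes lie under primes along injective maps) and is then itself
minimal, since a minimal prime of `A` below it also lies over `p`. Any `C'` strictly above `A`
violates the condition, so two distinct primes of `C'` lie over some minimal `p`; both contract
to the unique prime of `A` over `p`, which is minimal. -/

def RingHom.primesOver {R S : Type*} [CommRing R] [CommRing S] (f : R →+* S) (p : Ideal R) :
    Set (Ideal S) :=
  {P | P.IsPrime ∧ P.comap f = p}

namespace RingHom

variable {R S T : Type*} [CommRing R] [CommRing S] [CommRing T]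

theorem comap_mem_primesOver {f : R →+* S} {g : S →+* T} {p : Ideal R} {P : Ideal T}
    (hP : P ∈ (g.comp f).primesOver p) : P.comap g ∈ f.primesOver p :=
  have := hP.1
  ⟨Ideal.comap_isPrime g P, by rw [Ideal.comap_comap]; exact hP.2⟩

theorem mem_minimalPrimes_of_subsingleton_primesOver {f : R →+* S} {p : Ideal R} {P : Ideal S}
    (hp : p ∈ minimalPrimes R) (hP : P ∈ f.primesOver p) (hsub : (f.primesOver p).Subsingleton) :
    P ∈ minimalPrimes S := by
  have := hP.1
  obtain ⟨P₀, hP₀, hP₀P⟩ := Ideal.exists_minimalPrimes_le (bot_le : ⊥ ≤ P)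
  have := hP₀.1.1
  have hle : P₀.comap f ≤ p := hP.2 ▸ Ideal.comap_mono hP₀P
  have hP₀over : P₀ ∈ f.primesOver p :=
    ⟨hP₀.1.1, le_antisymm hle (hp.2 ⟨Ideal.comap_isPrime f P₀, bot_le⟩ hle)⟩
  exact hsub hP₀over hP ▸ hP₀

end RingHom

namespace Subring

variable {B : Type*} [CommRing B]

theorem ideal_eq_of_comap_inclusion_eq {c : Set (Subring B)} (hne : c.Nonempty)
    (hc : DirectedOn (· ≤ ·) c) {I J : Ideal ↥(sSup c)}
    (h : ∀ D (hD : D ∈ c), I.comap (inclusion (le_sSup hD)) = J.comap (inclusion (le_sSup hD))) :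
    I = J := by
  ext x
  obtain ⟨D, hD, hxD⟩ := (mem_sSup_of_directedOn hne hc).1 x.2
  exact Iff.of_eq (congrArg ((⟨x, hxD⟩ : D) ∈ ·) (h D hD))

def SubsingletonOverMinimalPrimes (C D : Subring B) : Prop :=
  ∃ h : C ≤ D, ∀ p ∈ minimalPrimes C, ((inclusion h).primesOver p).Subsingleton

variable {C : Subring B}

theorem SubsingletonOverMinimalPrimes.sSup {c : Set (Subring B)} (hne : c.Nonempty)
    (hc : DirectedOn (· ≤ ·) c) (h : ∀ D ∈ c, SubsingletonOverMinimalPrimes C D) :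
    SubsingletonOverMinimalPrimes C (sSup c) := by
  obtain ⟨D₀, hD₀⟩ := hne
  refine ⟨(h D₀ hD₀).1.trans (le_sSup hD₀), fun p hp P₁ hP₁ P₂ hP₂ => ?_⟩
  refine ideal_eq_of_comap_inclusion_eq ⟨D₀, hD₀⟩ hc fun D hD => ?_
  obtain ⟨_, hsub⟩ := h D hD
  exact hsub p hp (RingHom.comap_mem_primesOver hP₁) (RingHom.comap_mem_primesOver hP₂)

theorem SubsingletonOverMinimalPrimes.apparentlyFragile {A : Subring B}
    (hA : Maximal (SubsingletonOverMinimalPrimes C) A) : ApparentlyFragile A := by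
  intro C' hAC' hne
  obtain ⟨hCA, hsubA⟩ := hA.prop
  have hC' : ¬ SubsingletonOverMinimalPrimes C C' :=
    fun h => hne (le_antisymm hAC' (hA.le_of_ge h hAC'))
  obtain ⟨p, hp, hnot⟩ : ∃ p ∈ minimalPrimes C,
      ¬ ((inclusion (hCA.trans hAC')).primesOver p).Subsingleton := by
    by_contra! h
    exact hC' ⟨hCA.trans hAC', h⟩
  obtain ⟨P, hP, Q, hQ, hPQ⟩ := Set.not_subsingleton_iff.1 hnot
  have hPA : P.comap (inclusion hAC') ∈ (inclusion hCA).primesOver p :=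
    RingHom.comap_mem_primesOver hP
  exact ⟨_, RingHom.mem_minimalPrimes_of_subsingleton_primesOver hp hPA (hsubA p hp),
    P, Q, hP.1, hQ.1, hPQ, rfl, hsubA p hp (RingHom.comap_mem_primesOver hQ) hPA⟩

end Subring

theorem exists_apparentlyFragile_intermediate_general {B : Type*} [CommRing B] (C : Subring B) :
    ∃ A : Subring B, ∃ hCA : C ≤ A, ApparentlyFragile A ∧
      ∀ p ∈ minimalPrimes C,
        ∃! P : Ideal A, P.IsPrime ∧ P.comap (Subring.inclusion hCA) = p := by
  have hC : C.SubsingletonOverMinimalPrimes C :=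
    ⟨le_rfl, fun p _ P hP Q hQ =>
      Ideal.comap_injective_of_surjective _ (fun x => ⟨x, rfl⟩) (hP.2.trans hQ.2.symm)⟩
  obtain ⟨A, -, hA⟩ := zorn_le_nonempty₀ {D | C.SubsingletonOverMinimalPrimes D}
    (fun c hcS hc _ hy => ⟨sSup c,
      Subring.SubsingletonOverMinimalPrimes.sSup ⟨_, hy⟩ hc.directedOn hcS, fun _ => le_sSup⟩) C hC
  obtain ⟨hCA, hsub⟩ := hA.prop
  refine ⟨A, hCA, Subring.SubsingletonOverMinimalPrimes.apparentlyFragile hA, fun p hp => ?_⟩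
  obtain ⟨P, hP⟩ := Ideal.exists_comap_eq_of_mem_minimalPrimes_of_injective
    (Subring.inclusion_injective hCA) p hp
  exact ⟨P, hP, fun Q hQ => hsub p hp hQ hP⟩

/-- For any integral extension `C ⊆ B` there is an intermediate ring
`C ⊆ A ⊆ B` such that `A ⊆ B` is apparently fragile and every minimal prime of `C` has
exactly one preimage under `Spec A → Spec C`. -/
theorem exists_apparentlyFragile_intermediate {B : Type*} [CommRing B] (C : Subring B)
    (hint : Algebra.IsIntegral C B) :
    ∃ A : Subring B, ∃ hCA : C ≤ A, ApparentlyFragile A ∧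
      ∀ p ∈ minimalPrimes C,
        ∃! P : Ideal A, P.IsPrime ∧ P.comap (Subring.inclusion hCA) = p :=
  exists_apparentlyFragile_intermediate_general C
end
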